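/- arXiv:1203.5121 — 8 statements merged into one kernel-verified Lean document; each statement's English description precedes it below -/
import Mathlib

section
/- Let I be a set of indexes equipped with a well-founded strict order ≻, and for each α ∈ I let ⊢⊣_α be a symmetric relation and →_α a relation on a set A; put ⇒_α = ⊢⊣_α ∪ →_α. For J ⊆ I write →_J, ⊢⊣_J, ⇒_J for the unions over α ∈ J, write ⇔_J for the symmetric closure of ⇒_J, and write ⋎J = {β ∈ I | ∃ α ∈ J, β ≺ α}; for a single index α write ⋎α for ⋎{α}. Suppose that for all α, β ∈ I: (i) ←_α ∘ →_β ⊆ (⇔_{⋎α ∪ ⋎β})*, and (ii) ⊢⊣_α ∘ →_β ⊆ (⇔_{⋎α ∪ ⋎β})*. Then →_I is Church-Rosser modulo (⊢⊣_I)*. -/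
/-!
Label every step of a conversion by its index and measure the conversion by the multiset of its
labels, ordered by the multiset extension `Relation.CutExpand` of `≺`, which is well-founded
because `≺` is. By well-founded induction on this measure, every conversion is turned into a
valley `→* ∘ ⊢⊣* ∘ ←*`: peel off the first step and turn the rest into a valley. If the first
step and the first step of that valley form a peak `← ∘ →`, `⊢⊣ ∘ →` or `← ∘ ⊢⊣`, replace the
peak by the conversion given by (i) or (ii): its labels lie below `α` or `β`, so the labels
`α, β` of the peak are traded for smaller ones and the measure decreases.
-/

namespace AbstractCRM

open Relation

variable {A I : Type*}

inductive LabeledReflTransGen (R : I → A → A → Prop) : Multiset I → A → A → Prop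
  | refl (a : A) : LabeledReflTransGen R 0 a a
  | head {i : I} {M : Multiset I} {a b c : A} :
      R i a b → LabeledReflTransGen R M b c → LabeledReflTransGen R (i ::ₘ M) a c

namespace LabeledReflTransGen

variable {R S : I → A → A → Prop} {M N : Multiset I} {a b c : A}

theorem trans (hab : LabeledReflTransGen R M a b) (hbc : LabeledReflTransGen R N b c) :
    LabeledReflTransGen R (M + N) a c := by
  induction hab with
  | refl => simpa using hbc
  | head h _ ih => rw [Multiset.cons_add]; exact head h (ih hbc)

theorem tail {i : I} (hab : LabeledReflTransGen R M a b) (hbc : R i b c) :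
    LabeledReflTransGen R (i ::ₘ M) a c := by
  simpa only [Multiset.add_cons, add_zero] using hab.trans (head hbc (refl c))

theorem mono (hRS : ∀ i a b, R i a b → S i a b) (h : LabeledReflTransGen R M a b) :
    LabeledReflTransGen S M a b := by
  induction h with
  | refl => exact refl _
  | head h _ ih => exact head (hRS _ _ _ h) ih

theorem symm (hR : ∀ i a b, R i a b → R i b a) (h : LabeledReflTransGen R M a b) :
    LabeledReflTransGen R M b a := by
  induction h with
  | refl => exact refl _
  | head h _ ih => exact ih.tail (hR _ _ _ h)

theorem reflTransGen (h : LabeledReflTransGen R M a b) :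
    ReflTransGen (fun x y => ∃ i, R i x y) a b := by
  induction h with
  | refl => exact .refl
  | head h _ ih => exact .head ⟨_, h⟩ ih

theorem exists_of_reflTransGen {P : I → Prop}
    (h : ReflTransGen (fun x y => ∃ i, P i ∧ R i x y) a b) :
    ∃ M, (∀ i ∈ M, P i) ∧ LabeledReflTransGen R M a b := by
  induction h using ReflTransGen.head_induction_on with
  | refl => exact ⟨0, by simp, refl b⟩
  | head hstep _ ih =>
    obtain ⟨i, hi, hR⟩ := hstep
    obtain ⟨M, hM, h⟩ := ih
    exact ⟨i ::ₘ M, Multiset.forall_mem_cons.2 ⟨hi, hM⟩, head hR h⟩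

end LabeledReflTransGen

section CutExpand

variable {r : I → I → Prop}

theorem cutExpand_cons_self (a : I) (M : Multiset I) : CutExpand r M (a ::ₘ M) :=
  ⟨0, a, by simp, by rw [add_zero, add_comm, Multiset.singleton_add]⟩

theorem ReflTransGen.cutExpand_cons {M N : Multiset I} (a : I)
    (h : ReflTransGen (CutExpand r) M N) : ReflTransGen (CutExpand r) (a ::ₘ M) (a ::ₘ N) :=
  h.lift (a ::ₘ ·) fun _ _ h => by
    simpa only [Multiset.singleton_add] using (cutExpand_add_left {a}).2 h

theorem transGen_cutExpand_peak {α β : I} {Z : Multiset I} (X : Multiset I)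
    (hZ : ∀ γ ∈ Z, r γ α ∨ r γ β) : TransGen (CutExpand r) (Z + X) (α ::ₘ β ::ₘ X) := by
  classical
  set Zα := Z.filter (r · α)
  set Zβ := Z.filter (¬ r · α)
  have hα : CutExpand r (Zα + β ::ₘ X) (α ::ₘ β ::ₘ X) := by
    simpa only [Multiset.singleton_add] using
      (cutExpand_add_right (β ::ₘ X)).2
        (cutExpand_singleton fun γ hγ => (Multiset.mem_filter.1 hγ).2)
  have hβ : CutExpand r (Zβ + (Zα + X)) (β ::ₘ (Zα + X)) := by
    simpa only [Multiset.singleton_add] using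
      (cutExpand_add_right (Zα + X)).2 (cutExpand_singleton fun γ hγ =>
        have hγ := Multiset.mem_filter.1 hγ
        (hZ γ hγ.1).resolve_left hγ.2)
  have hZX : Zβ + (Zα + X) = Z + X := by
    rw [← add_assoc, add_comm Zβ, Multiset.filter_add_not]
  rw [← hZX]
  refine .tail (.single hβ) ?_
  simpa only [Multiset.add_cons] using hα

end CutExpand

variable {hd ar : I → A → A → Prop}

def ConvStep (hd ar : I → A → A → Prop) (i : I) (x y : A) : Prop :=
  ar i x y ∨ ar i y x ∨ hd i x y

theorem ConvStep.symm (hsym : ∀ α a b, hd α a b → hd α b a) {i : I} {x y : A}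
    (h : ConvStep hd ar i x y) : ConvStep hd ar i y x := by
  rcases h with h | h | h
  · exact .inr (.inl h)
  · exact .inl h
  · exact .inr (.inr (hsym _ _ _ h))

def LabeledValley (hd ar : I → A → A → Prop) (N : Multiset I) (x y : A) : Prop :=
  ∃ N₁ N₂ N₃ u v, N = N₁ + N₂ + N₃ ∧ LabeledReflTransGen ar N₁ x u ∧
    LabeledReflTransGen hd N₂ u v ∧ LabeledReflTransGen ar N₃ y v

theorem LabeledValley.refl (x : A) : LabeledValley hd ar 0 x x :=
  ⟨0, 0, 0, x, x, by simp, .refl x, .refl x, .refl x⟩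

theorem LabeledValley.conversion (hsym : ∀ α a b, hd α a b → hd α b a) {N : Multiset I}
    {x y : A} (h : LabeledValley hd ar N x y) : LabeledReflTransGen (ConvStep hd ar) N x y := by
  obtain ⟨N₁, N₂, N₃, u, v, rfl, h₁, h₂, h₃⟩ := h
  have h₁' := h₁.mono (S := ConvStep hd ar) fun _ _ _ => .inl
  have h₂' := h₂.mono (S := ConvStep hd ar) fun _ _ _ h => .inr (.inr h)
  have h₃' : LabeledReflTransGen (ConvStep hd ar) N₃ v y :=
    (h₃.mono fun _ _ _ => .inl).symm fun _ _ _ => ConvStep.symm hsym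
  exact (h₁'.trans h₂').trans h₃'

def DecreasingPeaks (r : I → I → Prop) (S P Q : I → A → A → Prop) : Prop :=
  ∀ α β x y z, P α x y → Q β y z →
    ∃ Z, (∀ γ ∈ Z, r γ α ∨ r γ β) ∧ LabeledReflTransGen S Z x z

theorem DecreasingPeaks.swap {r : I → I → Prop} {S P Q : I → A → A → Prop}
    (h : DecreasingPeaks r S P Q) (hS : ∀ i a b, S i a b → S i b a) :
    DecreasingPeaks r S (fun α x y => Q α y x) (fun β y z => P β z y) := by
  intro α β x y z hQ hP
  obtain ⟨Z, hZ, hzx⟩ := h β α z y x hP hQ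
  exact ⟨Z, fun γ hγ => (hZ γ hγ).symm, hzx.symm hS⟩

section Valley

variable {r : I → I → Prop}

/-- The bound `N ≤ M` on the labels of the valley is what lets the induction continue after the
valley is extended by one more step. -/
def AdmitsValleys (r : I → I → Prop) (hd ar : I → A → A → Prop) (M : Multiset I) : Prop :=
  ∀ x y, LabeledReflTransGen (ConvStep hd ar) M x y →
    ∃ N, ReflTransGen (CutExpand r) N M ∧ LabeledValley hd ar N x y

variable (hsym : ∀ α a b, hd α a b → hd α b a)
  (hArAr : DecreasingPeaks r (ConvStep hd ar) (fun α x y => ar α y x) ar)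
  (hHdAr : DecreasingPeaks r (ConvStep hd ar) hd ar)
include hsym hArAr hHdAr

theorem exists_labeledValley_cons {α : I} {N : Multiset I} {x x' y : A}
    (IH : ∀ M, TransGen (CutExpand r) M (α ::ₘ N) → AdmitsValleys r hd ar M)
    (hs : ConvStep hd ar α x x') (hv : LabeledValley hd ar N x' y) :
    ∃ N', ReflTransGen (CutExpand r) N' (α ::ₘ N) ∧ LabeledValley hd ar N' x y := by
  obtain ⟨N₁, N₂, N₃, u, v, rfl, h₁, h₂, h₃⟩ := hv
  have reduce : ∀ β X z, (∃ Z, (∀ γ ∈ Z, r γ α ∨ r γ β) ∧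
      LabeledReflTransGen (ConvStep hd ar) Z x z) → LabeledValley hd ar X z y →
      β ::ₘ X = N₁ + N₂ + N₃ → ∃ N', ReflTransGen (CutExpand r) N' (α ::ₘ (N₁ + N₂ + N₃)) ∧
        LabeledValley hd ar N' x y := by
    rintro β X z ⟨Z, hZ, hxz⟩ hzy hX
    rw [← hX] at IH ⊢
    have hlt := transGen_cutExpand_peak X hZ
    obtain ⟨N', hN', hv⟩ := IH _ hlt x y (hxz.trans (hzy.conversion hsym))
    exact ⟨N', hN'.trans hlt.to_reflTransGen, hv⟩
  rcases hs with hf | hb | he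
  · exact ⟨_, .refl, α ::ₘ N₁, N₂, N₃, u, v, by simp only [Multiset.cons_add], h₁.head hf, h₂,
      h₃⟩
  · cases h₁ with
    | refl =>
      cases h₂ with
      | refl => exact ⟨_, .refl, 0, 0, α ::ₘ N₃, x, x, by simp, .refl x, .refl x, h₃.tail hb⟩
      | @head β N₂ _ z _ hβ h₂ =>
        exact reduce β (0 + N₂ + N₃) z
          (hHdAr.swap (fun _ _ _ => ConvStep.symm hsym) _ _ _ _ _ hb (hsym _ _ _ hβ))
          ⟨0, N₂, N₃, z, v, rfl, .refl z, h₂, h₃⟩ (by simp only [zero_add, Multiset.cons_add])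
    | head hβ h₁' =>
      exact reduce _ _ _ (hArAr _ _ _ _ _ hb hβ) ⟨_, N₂, N₃, u, v, rfl, h₁', h₂, h₃⟩
        (by simp only [Multiset.cons_add])
  · cases h₁ with
    | refl => exact ⟨_, .refl, 0, α ::ₘ N₂, N₃, x, v, by simp, .refl x, h₂.head he, h₃⟩
    | head hβ h₁' =>
      exact reduce _ _ _ (hHdAr _ _ _ _ _ he hβ) ⟨_, N₂, N₃, u, v, rfl, h₁', h₂, h₃⟩
        (by simp only [Multiset.cons_add])

theorem admitsValleys (hr : WellFounded r) (M : Multiset I) : AdmitsValleys r hd ar M := by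
  induction M using hr.cutExpand.transGen.induction with
  | _ M IH =>
  intro x y h
  cases h with
  | refl => exact ⟨0, .refl, .refl x⟩
  | @head α M' _ x' _ hs h' =>
    obtain ⟨N, hNM, hv⟩ := IH M' (.single (cutExpand_cons_self α M')) _ _ h'
    have hNM' := ReflTransGen.cutExpand_cons α hNM
    obtain ⟨N', hN', hv'⟩ := exists_labeledValley_cons hsym hArAr hHdAr
      (fun K hK => IH K (hK.trans_left hNM')) hs hv
    exact ⟨N', hN'.trans hNM', hv'⟩

end Valley

theorem decreasingPeaks_of_reflTransGen {succ : I → I → Prop}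
    (hsym : ∀ α a b, hd α a b → hd α b a) {P Q : I → A → A → Prop}
    (h : ∀ α β x y z, P α x y → Q β y z → ReflTransGen (fun x y =>
      (∃ γ, (succ α γ ∨ succ β γ) ∧ (hd γ x y ∨ ar γ x y)) ∨
      (∃ γ, (succ α γ ∨ succ β γ) ∧ (hd γ y x ∨ ar γ y x))) x z) :
    DecreasingPeaks (fun γ α => succ α γ) (ConvStep hd ar) P Q := by
  refine fun α β x y z hP hQ =>
    LabeledReflTransGen.exists_of_reflTransGen (ReflTransGen.mono ?_ _ _ (h α β x y z hP hQ))
  rintro a b (⟨γ, hγ, hab | hab⟩ | ⟨γ, hγ, hba | hba⟩)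
  · exact ⟨γ, hγ, .inr (.inr hab)⟩
  · exact ⟨γ, hγ, .inl hab⟩
  · exact ⟨γ, hγ, .inr (.inr (hsym _ _ _ hba))⟩
  · exact ⟨γ, hγ, .inr (.inl hba)⟩

end AbstractCRM

open AbstractCRM Relation in
theorem abstract_crm_indexed_general {A I : Type*} (succ : I → I → Prop)
    (hd ar : I → A → A → Prop)
    (hwf : ¬ ∃ f : ℕ → I, ∀ n, succ (f n) (f (n + 1)))
    (hsym : ∀ α a b, hd α a b → hd α b a)
    (hi : ∀ α β a b c, ar α b a → ar β b c →
      Relation.ReflTransGen (fun x y =>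
        (∃ γ, (succ α γ ∨ succ β γ) ∧ (hd γ x y ∨ ar γ x y)) ∨
        (∃ γ, (succ α γ ∨ succ β γ) ∧ (hd γ y x ∨ ar γ y x))) a c)
    (hii : ∀ α β a b c, hd α a b → ar β b c →
      Relation.ReflTransGen (fun x y =>
        (∃ γ, (succ α γ ∨ succ β γ) ∧ (hd γ x y ∨ ar γ x y)) ∨
        (∃ γ, (succ α γ ∨ succ β γ) ∧ (hd γ y x ∨ ar γ y x))) a c) :
    ∀ a b, Relation.ReflTransGen (fun x y =>
        (∃ α, ar α x y) ∨ (∃ α, ar α y x) ∨ (∃ α, hd α x y)) a b →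
      ∃ u v, Relation.ReflTransGen (fun x y => ∃ α, ar α x y) a u ∧
        Relation.ReflTransGen (fun x y => ∃ α, hd α x y) u v ∧
        Relation.ReflTransGen (fun x y => ∃ α, ar α x y) b v := by
  intro a b hab
  have hwf' : WellFounded fun γ α => succ α γ :=
    wellFounded_iff_isEmpty_descending_chain.2 ⟨fun ⟨f, hf⟩ => hwf ⟨f, hf⟩⟩
  have hconv : ReflTransGen (fun x y => ∃ α, True ∧ ConvStep hd ar α x y) a b := by
    refine ReflTransGen.mono ?_ _ _ hab
    rintro x y (⟨α, h⟩ | ⟨α, h⟩ | ⟨α, h⟩)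
    exacts [⟨α, trivial, .inl h⟩, ⟨α, trivial, .inr (.inl h)⟩, ⟨α, trivial, .inr (.inr h)⟩]
  obtain ⟨M, -, hM⟩ := LabeledReflTransGen.exists_of_reflTransGen hconv
  obtain ⟨-, -, N₁, N₂, N₃, u, v, -, h₁, h₂, h₃⟩ :=
    admitsValleys hsym (decreasingPeaks_of_reflTransGen hsym hi)
      (decreasingPeaks_of_reflTransGen hsym hii) hwf' M a b hM
  exact ⟨u, v, h₁.reflTransGen, h₂.reflTransGen, h₃.reflTransGen⟩

/-- Lemma 2.2 (basis of the abstract criterion for Church-Rosser modulo).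
`succ α β` means `α ≻ β` (so `β ≺ α`); `hd α` is the symmetric relation `⊢⊣_α`,
`ar α` is `→_α`.  `⋎α ∪ ⋎β = {γ | γ ≺ α ∨ γ ≺ β}`. -/
theorem abstract_crm_indexed {A I : Type*} (succ : I → I → Prop)
    (hd ar : I → A → A → Prop)
    (hirrefl : ∀ α, ¬ succ α α)
    (htrans : ∀ α β γ, succ α β → succ β γ → succ α γ)
    (hwf : ¬ ∃ f : ℕ → I, ∀ n, succ (f n) (f (n + 1)))
    (hsym : ∀ α a b, hd α a b → hd α b a)
    (hi : ∀ α β a b c, ar α b a → ar β b c →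
      Relation.ReflTransGen (fun x y =>
        (∃ γ, (succ α γ ∨ succ β γ) ∧ (hd γ x y ∨ ar γ x y)) ∨
        (∃ γ, (succ α γ ∨ succ β γ) ∧ (hd γ y x ∨ ar γ y x))) a c)
    (hii : ∀ α β a b c, hd α a b → ar β b c →
      Relation.ReflTransGen (fun x y =>
        (∃ γ, (succ α γ ∨ succ β γ) ∧ (hd γ x y ∨ ar γ x y)) ∨
        (∃ γ, (succ α γ ∨ succ β γ) ∧ (hd γ y x ∨ ar γ y x))) a c) :
    ∀ a b, Relation.ReflTransGen (fun x y =>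
        (∃ α, ar α x y) ∨ (∃ α, ar α y x) ∨ (∃ α, hd α x y)) a b →
      ∃ u v, Relation.ReflTransGen (fun x y => ∃ α, ar α x y) a u ∧
        Relation.ReflTransGen (fun x y => ∃ α, hd α x y) u v ∧
        Relation.ReflTransGen (fun x y => ∃ α, ar α x y) b v :=
  abstract_crm_indexed_general succ hd ar hwf hsym hi hii
end

section
/- Let ⊢⊣, →, ⤳ be relations on a set A such that ⊢⊣ is symmetric, ⤳ ⊆ ⊢⊣, and → ∘ ⤳* is well-founded. Let ⇒ = ⤳ ∪ → and let ⇐ be the inverse of ⇒. Suppose (i) ← ∘ → ⊆ ⇒* ∘ ⊢⊣= ∘ ⇐*, and (ii) ⊢⊣ ∘ → ⊆ (⊢⊣= ∘ ⇐*) ∪ (→ ∘ ⇒* ∘ ⊢⊣= ∘ ⇐*). Then → is Church-Rosser modulo ⊢⊣*. -/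
open Relation
namespace CRMProof
variable {A : Type*}








/-- Decorated conversions: forward rewrite steps (`consF`), backward rewrite
steps (`consB`) and equational steps (`consE`). -/
inductive Conv (hd ar : A → A → Prop) : A → A → Type _ where
  | nil {a} : Conv hd ar a a
  | consF {a b c} (h : ar a b) (rest : Conv hd ar b c) : Conv hd ar a c
  | consB {a b c} (h : ar b a) (rest : Conv hd ar b c) : Conv hd ar a c
  | consE {a b c} (h : hd a b) (rest : Conv hd ar b c) : Conv hd ar a c

namespace Conv

variable {hd ar : A → A → Prop}

def append : ∀ {a b c}, Conv hd ar a b → Conv hd ar b c → Conv hd ar a c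
  | _, _, _, nil, d => d
  | _, _, _, consF h r, d => consF h (r.append d)
  | _, _, _, consB h r, d => consB h (r.append d)
  | _, _, _, consE h r, d => consE h (r.append d)

/-- The measure of a conversion. -/
def mu : ∀ {a b}, Conv hd ar a b → Multiset (A × ℕ)
  | _, _, nil => 0
  | _, _, consF (a := a) _ r => (a, 0) ::ₘ mu r
  | _, _, consB (b := b) _ r => (b, 0) ::ₘ mu r
  | _, _, consE (a := a) (b := b) _ r => (a, 1) ::ₘ (b, 1) ::ₘ mu r

lemma mu_append : ∀ {a b c} (x : Conv hd ar a b) (y : Conv hd ar b c),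
    mu (x.append y) = mu x + mu y
  | _, _, _, nil, d => by simp [append, mu]
  | _, _, _, consF h r, d => by simp [append, mu, mu_append r d]
  | _, _, _, consB h r, d => by simp [append, mu, mu_append r d]
  | _, _, _, consE h r, d => by simp [append, mu, mu_append r d]

def onlyB : ∀ {a b}, Conv hd ar a b → Prop
  | _, _, nil => True
  | _, _, consB _ r => onlyB r
  | _, _, consF _ _ => False
  | _, _, consE _ _ => False

def eb : ∀ {a b}, Conv hd ar a b → Prop
  | _, _, nil => True
  | _, _, consB _ r => onlyB r
  | _, _, consF _ _ => False
  | _, _, consE _ r => eb r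

def isv : ∀ {a b}, Conv hd ar a b → Prop
  | _, _, nil => True
  | _, _, consB _ r => onlyB r
  | _, _, consF _ r => isv r
  | _, _, consE _ r => eb r

lemma onlyB_sound : ∀ {a b} (c : Conv hd ar a b), onlyB c →
    ReflTransGen ar b a
  | _, _, nil, _ => .refl
  | _, _, consB h r, H => (onlyB_sound r H).tail h
  | _, _, consF _ _, H => H.elim
  | _, _, consE _ _, H => H.elim

lemma eb_sound : ∀ {a b} (c : Conv hd ar a b), eb c →
    ∃ v, ReflTransGen hd a v ∧ ReflTransGen ar b v
  | a, _, nil, _ => ⟨a, .refl, .refl⟩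
  | a, _, consB h r, H => ⟨a, .refl, (onlyB_sound r H).tail h⟩
  | _, _, consF _ _, H => H.elim
  | _, _, consE h r, H => by
      obtain ⟨v, h1, h2⟩ := eb_sound r H
      exact ⟨v, h1.head h, h2⟩

lemma isv_sound : ∀ {a b} (c : Conv hd ar a b), isv c →
    ∃ u v, ReflTransGen ar a u ∧ ReflTransGen hd u v ∧ ReflTransGen ar b v
  | a, _, nil, _ => ⟨a, a, .refl, .refl, .refl⟩
  | a, _, consB h r, H => ⟨a, a, .refl, .refl, (onlyB_sound r H).tail h⟩
  | _, _, consF h r, H => by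
      obtain ⟨u, v, h1, h2, h3⟩ := isv_sound r H
      exact ⟨u, v, h1.head h, h2, h3⟩
  | a, _, consE h r, H => by
      obtain ⟨v, h1, h2⟩ := eb_sound r H
      exact ⟨a, v, .refl, h1.head h, h2⟩

end Conv








variable {α : Type*} {lt : α → α → Prop}

lemma cutExpand_cons {s' s : Multiset α} (x : α) (h : CutExpand lt s' s) :
    CutExpand lt (x ::ₘ s') (x ::ₘ s) := by
  obtain ⟨t, a, hdom, he⟩ := h
  exact ⟨t, a, hdom, by rw [Multiset.cons_add, Multiset.cons_add, he]⟩

lemma dmle_cons {s' s : Multiset α} (x : α)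
    (h : ReflTransGen (CutExpand lt) s' s) :
    ReflTransGen (CutExpand lt) (x ::ₘ s') (x ::ₘ s) := by
  induction h with
  | refl => exact .refl
  | tail _ h2 ih => exact ih.tail (cutExpand_cons x h2)

lemma dm_main : ∀ (X : Multiset α), X ≠ 0 → ∀ (Y M₀ : Multiset α),
    (∀ y ∈ Y, ∃ x ∈ X, lt y x) →
    TransGen (CutExpand lt) (M₀ + Y) (M₀ + X) := by
  intro X
  induction X using Multiset.induction with
  | empty => simp
  | cons x X' ih =>
    intro _ Y M₀ hdom
    by_cases hX' : X' = 0
    · subst hX'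
      apply TransGen.single
      refine ⟨Y, x, fun y hy => ?_, ?_⟩
      · obtain ⟨x', hx', h⟩ := hdom y hy
        simp only [Multiset.mem_cons, Multiset.notMem_zero, or_false] at hx'
        exact hx' ▸ h
      · simp only [← Multiset.singleton_add]
        abel
    · classical
      have hY : Y.filter (fun y => lt y x) + Y.filter (fun y => ¬ lt y x) = Y :=
        Multiset.filter_add_not _ _
      have step2 : TransGen (CutExpand lt)
          ((M₀ + Y.filter (fun y => lt y x)) + Y.filter (fun y => ¬ lt y x))
          ((M₀ + Y.filter (fun y => lt y x)) + X') := by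
        refine ih hX' _ _ (fun y hy => ?_)
        obtain ⟨x', hx', h⟩ := hdom y (Multiset.mem_of_mem_filter hy)
        have hnot := (Multiset.mem_filter.1 hy).2
        rcases Multiset.mem_cons.1 hx' with rfl | hx'
        · exact absurd h hnot
        · exact ⟨x', hx', h⟩
      have step1 : CutExpand lt ((M₀ + Y.filter (fun y => lt y x)) + X')
          (M₀ + (x ::ₘ X')) := by
        refine ⟨Y.filter (fun y => lt y x), x,
          fun y hy => (Multiset.mem_filter.1 hy).2, ?_⟩
        simp only [← Multiset.singleton_add]
        abel
      have := TransGen.tail step2 step1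
      rwa [add_assoc, hY] at this

/-- From the absence of infinite chains we get well-foundedness of the flip. -/
lemma wf_flip_of_no_chain {r : α → α → Prop}
    (h : ¬ ∃ f : ℕ → α, ∀ n, r (f n) (f (n + 1))) :
    WellFounded (fun x y => r y x) := by
  by_contra hwf
  apply h
  have hex : ∃ a, ¬ Acc (fun x y => r y x) a := by
    by_contra h'
    push_neg at h'
    exact hwf ⟨h'⟩
  obtain ⟨a0, ha0⟩ := hex
  have step : ∀ a : α, ¬ Acc (fun x y => r y x) a →
      ∃ b, r a b ∧ ¬ Acc (fun x y => r y x) b := by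
    intro a ha
    by_contra h'
    push_neg at h'
    exact ha (Acc.intro a fun b hb => h' b hb)
  choose g hg1 hg2 using step
  let f : ℕ → {a : α // ¬ Acc (fun x y => r y x) a} := fun n =>
    Nat.rec ⟨a0, ha0⟩ (fun _ p => ⟨g p.1 p.2, hg2 p.1 p.2⟩) n
  exact ⟨fun n => (f n).1, fun n => hg1 (f n).1 (f n).2⟩







section
variable {hd ar lead : A → A → Prop}

/-- The "bigger than" relation used for the termination measure. -/
def Gt' (ar lead : A → A → Prop) : A → A → Prop :=
  TransGen (Relation.Comp ar (ReflTransGen lead))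

/-- The element order on the measure's entries. -/
def Lt' (ar lead : A → A → Prop) : A × ℕ → A × ℕ → Prop :=
  fun e f => Gt' ar lead f.1 e.1 ∨ (f.1 = e.1 ∧ e.2 < f.2)

lemma wf_Lt' (hwf : ¬ ∃ f : ℕ → A, ∀ n,
    Relation.Comp ar (ReflTransGen lead) (f n) (f (n + 1))) :
    WellFounded (Lt' ar lead) := by
  have wfS : WellFounded (fun x y => Relation.Comp ar (ReflTransGen lead) y x) :=
    wf_flip_of_no_chain hwf
  have wfT : WellFounded (fun x y => Gt' ar lead y x) := by
    refine Subrelation.wf ?_ wfS.transGen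
    intro x y h
    exact (Relation.transGen_swap (r := Relation.Comp ar (ReflTransGen lead))
      (a := x) (b := y)).2 h
  have wflex := WellFounded.prod_lex wfT (Nat.lt_wfRel.wf)
  refine Subrelation.wf ?_ wflex
  rintro ⟨x, m⟩ ⟨y, n⟩ h
  rcases h with h | ⟨he, hn⟩
  · exact Prod.Lex.left _ _ h
  · cases he; exact Prod.Lex.right _ hn

lemma gt_of : ∀ {x y : A},
    ReflTransGen (fun p q => lead p q ∨ ar p q) x y → ∀ {b z : A}, ar b z →
    ReflTransGen lead z x → Gt' ar lead b y := by
  intro x y hxy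
  induction hxy using ReflTransGen.head_induction_on with
  | refl => exact fun h1 h2 => TransGen.single ⟨_, h1, h2⟩
  | head hs _ ih =>
    intro b z h1 h2
    rcases hs with hl | har
    · exact ih h1 (h2.tail hl)
    · exact (TransGen.single ⟨z, h1, h2⟩).trans (ih har .refl)

lemma fwdConv (hsub : ∀ a b, lead a b → hd a b) {a u : A}
    (h : ReflTransGen (fun x y => lead x y ∨ ar x y) a u) :
    ∃ c : Conv hd ar a u, ∀ e ∈ Conv.mu c,
      ReflTransGen (fun x y => lead x y ∨ ar x y) a e.1 := by
  induction h using ReflTransGen.head_induction_on with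
  | refl => exact ⟨.nil, by simp [Conv.mu]⟩
  | @head x x' hs hrest ih =>
    obtain ⟨c, hc⟩ := ih
    rcases hs with hl | har
    · refine ⟨.consE (hsub _ _ hl) c, ?_⟩
      intro e he
      simp only [Conv.mu, Multiset.mem_cons] at he
      rcases he with rfl | rfl | he
      · exact .refl
      · exact .single (Or.inl hl)
      · exact (hc e he).head (Or.inl hl)
    · refine ⟨.consF har c, ?_⟩
      intro e he
      simp only [Conv.mu, Multiset.mem_cons] at he
      rcases he with rfl | he
      · exact .refl
      · exact (hc e he).head (Or.inr har)

lemma bwdConv (hsym : ∀ a b, hd a b → hd b a) (hsub : ∀ a b, lead a b → hd a b)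
    {c v : A} (h : ReflTransGen (fun x y => lead x y ∨ ar x y) c v) :
    ∃ d : Conv hd ar v c, ∀ e ∈ Conv.mu d,
      ReflTransGen (fun x y => lead x y ∨ ar x y) c e.1 := by
  induction h with
  | refl => exact ⟨.nil, by simp [Conv.mu]⟩
  | @tail m w hcm hmw ih =>
    obtain ⟨d, hdmem⟩ := ih
    rcases hmw with hl | har
    · refine ⟨.consE (hsym _ _ (hsub _ _ hl)) d, ?_⟩
      intro e he
      simp only [Conv.mu, Multiset.mem_cons] at he
      rcases he with rfl | rfl | he
      · exact hcm.tail (Or.inl hl)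
      · exact hcm
      · exact hdmem e he
    · refine ⟨.consB har d, ?_⟩
      intro e he
      simp only [Conv.mu, Multiset.mem_cons] at he
      rcases he with rfl | he
      · exact hcm
      · exact hdmem e he
end

section Main
variable {hd ar lead : A → A → Prop}

lemma Lt'_left {e f : A × ℕ} (h : Gt' ar lead f.1 e.1) : Lt' ar lead e f := Or.inl h
lemma Lt'_snd {x : A} {i j : ℕ} (h : i < j) : Lt' ar lead (x, i) (x, j) := Or.inr ⟨rfl, h⟩

lemma dm_lt_cons {lt : A × ℕ → A × ℕ → Prop} (x : A × ℕ) (s : Multiset (A × ℕ)) :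
    TransGen (CutExpand lt) s (x ::ₘ s) :=
  TransGen.single ⟨0, x, by simp, by rw [add_zero, add_comm, Multiset.singleton_add]⟩

theorem mainLem
    (hsym : ∀ a b, hd a b → hd b a)
    (hsub : ∀ a b, lead a b → hd a b)
    (hwf : ¬ ∃ f : ℕ → A, ∀ n,
      Relation.Comp ar (Relation.ReflTransGen lead) (f n) (f (n + 1)))
    (hi : ∀ a b c, ar b a → ar b c →
      ∃ u v, Relation.ReflTransGen (fun x y => lead x y ∨ ar x y) a u ∧
        Relation.ReflGen hd u v ∧
        Relation.ReflTransGen (fun x y => lead x y ∨ ar x y) c v)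
    (hii : ∀ a b c, hd a b → ar b c →
      (∃ v, Relation.ReflGen hd a v ∧
        Relation.ReflTransGen (fun x y => lead x y ∨ ar x y) c v) ∨
      (∃ u u' v, ar a u ∧
        Relation.ReflTransGen (fun x y => lead x y ∨ ar x y) u u' ∧
        Relation.ReflGen hd u' v ∧
        Relation.ReflTransGen (fun x y => lead x y ∨ ar x y) c v)) :
    ∀ (M : Multiset (A × ℕ)) (a b : A) (c : Conv hd ar a b), Conv.mu c = M →
      ∃ c' : Conv hd ar a b, Conv.isv c' ∧
        ReflTransGen (CutExpand (Lt' ar lead)) (Conv.mu c') (Conv.mu c) := by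
  have wfdm : WellFounded (TransGen (CutExpand (Lt' ar lead))) :=
    ((wf_Lt' hwf).cutExpand).transGen
  intro M
  refine wfdm.induction (C := fun M => ∀ (a b : A) (c : Conv hd ar a b),
    Conv.mu c = M → ∃ c' : Conv hd ar a b, Conv.isv c' ∧
      ReflTransGen (CutExpand (Lt' ar lead)) (Conv.mu c') (Conv.mu c)) M ?_
  clear M
  intro M IH a b c hM
  have finish : ∀ {a' b' : A} (cold cnew : Conv hd ar a' b'),
      TransGen (CutExpand (Lt' ar lead)) (Conv.mu cnew) (Conv.mu cold) →
      ReflTransGen (CutExpand (Lt' ar lead)) (Conv.mu cold) M →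
      ∃ c' : Conv hd ar a' b', Conv.isv c' ∧
        ReflTransGen (CutExpand (Lt' ar lead)) (Conv.mu c') (Conv.mu cold) := by
    intro a' b' cold cnew hlt hle
    obtain ⟨c'', hv, hl⟩ := IH (Conv.mu cnew) (hlt.trans_left hle) a' b' cnew rfl
    exact ⟨c'', hv, hl.trans hlt.to_reflTransGen⟩
  cases c with
  | nil => exact ⟨.nil, trivial, .refl⟩
  | @consF _ m _ h rest =>
    have hlt : TransGen (CutExpand (Lt' ar lead)) (Conv.mu rest)
        (Conv.mu (Conv.consF h rest)) := by
      simp only [Conv.mu]; exact dm_lt_cons _ _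
    obtain ⟨r', hv, hle⟩ := IH (Conv.mu rest) (hM ▸ hlt) _ _ rest rfl
    refine ⟨.consF h r', by simpa [Conv.isv] using hv, ?_⟩
    simp only [Conv.mu]
    exact dmle_cons _ hle
  | @consE _ m _ h rest =>
    have hlt : TransGen (CutExpand (Lt' ar lead)) (Conv.mu rest)
        (Conv.mu (Conv.consE h rest)) := by
      simp only [Conv.mu]
      exact (dm_lt_cons _ _).trans (dm_lt_cons _ _)
    obtain ⟨r', hv, hle⟩ := IH (Conv.mu rest) (hM ▸ hlt) _ _ rest rfl
    cases r' with
    | nil =>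
      refine ⟨.consE h .nil, by simp [Conv.isv, Conv.eb], ?_⟩
      simp only [Conv.mu]
      exact dmle_cons _ (dmle_cons _ (by simpa [Conv.mu] using hle))
    | consB h₂ r₂ =>
      refine ⟨.consE h (.consB h₂ r₂), ?_, ?_⟩
      · simpa [Conv.isv, Conv.eb] using hv
      · simp only [Conv.mu]
        exact dmle_cons _ (dmle_cons _ (by simpa [Conv.mu] using hle))
    | consE h₂ r₂ =>
      refine ⟨.consE h (.consE h₂ r₂), ?_, ?_⟩
      · simpa [Conv.isv, Conv.eb] using hv
      · simp only [Conv.mu]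
        exact dmle_cons _ (dmle_cons _ (by simpa [Conv.mu] using hle))
    | @consF _ c₀ _ h₂ r₂ =>
      -- cliff: a ~ m → c₀
      have hle' : ReflTransGen (CutExpand (Lt' ar lead))
          (Conv.mu (Conv.consE h (Conv.consF h₂ r₂)))
          (Conv.mu (Conv.consE h rest)) := by
        simp only [Conv.mu]
        exact dmle_cons _ (dmle_cons _ (by simpa [Conv.mu] using hle))
      rcases hii a m c₀ h h₂ with ⟨v, hav, hcv⟩ | ⟨u, u', v, hau, huu', hu'v, hcv⟩
      · obtain ⟨rev, hrev⟩ := bwdConv hsym hsub hcv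
        cases hav with
        | refl =>
          refine finish (Conv.consE h rest) (rev.append r₂)
            (TransGen.trans_left ?_ hle') (hM ▸ .refl)
          have e1 : Conv.mu (rev.append r₂) = Conv.mu r₂ + Conv.mu rev := by
            rw [Conv.mu_append]; exact add_comm _ _
          have e2 : Conv.mu (Conv.consE h (Conv.consF h₂ r₂)) =
              Conv.mu r₂ + ((a, 1) ::ₘ (m, 1) ::ₘ {(m, 0)}) := by
            simp only [Conv.mu, ← Multiset.singleton_add]; abel
          rw [e1, e2]
          refine dm_main _ (by simp) _ _ ?_
          intro y hy
          exact ⟨(m, 0), by simp, Lt'_left (gt_of (hrev y hy) h₂ .refl)⟩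
        | single hav' =>
          refine finish (Conv.consE h rest) (.consE hav' (rev.append r₂))
            (TransGen.trans_left ?_ hle') (hM ▸ .refl)
          have e1 : Conv.mu (Conv.consE hav' (rev.append r₂)) =
              ((a, 1) ::ₘ Conv.mu r₂) + ((v, 1) ::ₘ Conv.mu rev) := by
            simp only [Conv.mu, Conv.mu_append, ← Multiset.singleton_add]; abel
          have e2 : Conv.mu (Conv.consE h (Conv.consF h₂ r₂)) =
              ((a, 1) ::ₘ Conv.mu r₂) + ((m, 1) ::ₘ {(m, 0)}) := by
            simp only [Conv.mu, ← Multiset.singleton_add]; abel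
          rw [e1, e2]
          refine dm_main _ (by simp) _ _ ?_
          intro y hy
          simp only [Multiset.mem_cons] at hy
          rcases hy with rfl | hy
          · exact ⟨(m, 0), by simp, Lt'_left (gt_of hcv h₂ .refl)⟩
          · exact ⟨(m, 0), by simp, Lt'_left (gt_of (hrev y hy) h₂ .refl)⟩
      · obtain ⟨fw, hfw⟩ := fwdConv hsub huu'
        obtain ⟨rev, hrev⟩ := bwdConv hsym hsub hcv
        cases hu'v with
        | refl =>
          refine finish (Conv.consE h rest) (.consF hau (fw.append (rev.append r₂)))
            (TransGen.trans_left ?_ hle') (hM ▸ .refl)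
          have e1 : Conv.mu (Conv.consF hau (fw.append (rev.append r₂))) =
              Conv.mu r₂ + ((a, 0) ::ₘ (Conv.mu fw + Conv.mu rev)) := by
            simp only [Conv.mu, Conv.mu_append, ← Multiset.singleton_add]; abel
          have e2 : Conv.mu (Conv.consE h (Conv.consF h₂ r₂)) =
              Conv.mu r₂ + ((a, 1) ::ₘ (m, 1) ::ₘ {(m, 0)}) := by
            simp only [Conv.mu, ← Multiset.singleton_add]; abel
          rw [e1, e2]
          refine dm_main _ (by simp) _ _ ?_
          intro y hy
          simp only [Multiset.mem_cons, Multiset.mem_add] at hy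
          rcases hy with rfl | hy | hy
          · exact ⟨(a, 1), by simp, Lt'_snd (by norm_num)⟩
          · exact ⟨(a, 1), by simp, Lt'_left (gt_of (hfw y hy) hau .refl)⟩
          · exact ⟨(m, 0), by simp, Lt'_left (gt_of (hrev y hy) h₂ .refl)⟩
        | single hv' =>
          refine finish (Conv.consE h rest)
            (.consF hau (fw.append (.consE hv' (rev.append r₂))))
            (TransGen.trans_left ?_ hle') (hM ▸ .refl)
          have e1 : Conv.mu (Conv.consF hau (fw.append (.consE hv' (rev.append r₂)))) =
              Conv.mu r₂ + ((a, 0) ::ₘ (u', 1) ::ₘ (v, 1) ::ₘ (Conv.mu fw + Conv.mu rev)) := by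
            simp only [Conv.mu, Conv.mu_append, ← Multiset.singleton_add]; abel
          have e2 : Conv.mu (Conv.consE h (Conv.consF h₂ r₂)) =
              Conv.mu r₂ + ((a, 1) ::ₘ (m, 1) ::ₘ {(m, 0)}) := by
            simp only [Conv.mu, ← Multiset.singleton_add]; abel
          rw [e1, e2]
          refine dm_main _ (by simp) _ _ ?_
          intro y hy
          simp only [Multiset.mem_cons, Multiset.mem_add] at hy
          rcases hy with rfl | rfl | rfl | hy | hy
          · exact ⟨(a, 1), by simp, Lt'_snd (by norm_num)⟩
          · exact ⟨(a, 1), by simp, Lt'_left (gt_of huu' hau .refl)⟩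
          · exact ⟨(m, 0), by simp, Lt'_left (gt_of hcv h₂ .refl)⟩
          · exact ⟨(a, 1), by simp, Lt'_left (gt_of (hfw y hy) hau .refl)⟩
          · exact ⟨(m, 0), by simp, Lt'_left (gt_of (hrev y hy) h₂ .refl)⟩
  | @consB _ m _ h rest =>
    have hlt : TransGen (CutExpand (Lt' ar lead)) (Conv.mu rest)
        (Conv.mu (Conv.consB h rest)) := by
      simp only [Conv.mu]; exact dm_lt_cons _ _
    obtain ⟨r', hv, hle⟩ := IH (Conv.mu rest) (hM ▸ hlt) _ _ rest rfl
    cases r' with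
    | nil =>
      refine ⟨.consB h .nil, by simp [Conv.isv, Conv.onlyB], ?_⟩
      simp only [Conv.mu]
      exact dmle_cons _ (by simpa [Conv.mu] using hle)
    | consB h₂ r₂ =>
      refine ⟨.consB h (.consB h₂ r₂), ?_, ?_⟩
      · simpa [Conv.isv, Conv.onlyB] using hv
      · simp only [Conv.mu]
        exact dmle_cons _ (by simpa [Conv.mu] using hle)
    | @consF _ c₀ _ h₂ r₂ =>
      -- peak: a ← m → c₀
      have hle' : ReflTransGen (CutExpand (Lt' ar lead))
          (Conv.mu (Conv.consB h (Conv.consF h₂ r₂)))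
          (Conv.mu (Conv.consB h rest)) := by
        simp only [Conv.mu]
        exact dmle_cons _ (by simpa [Conv.mu] using hle)
      obtain ⟨u, v, hau, huv, hcv⟩ := hi a m c₀ h h₂
      obtain ⟨fw, hfw⟩ := fwdConv hsub hau
      obtain ⟨rev, hrev⟩ := bwdConv hsym hsub hcv
      cases huv with
      | refl =>
        refine finish (Conv.consB h rest) (fw.append (rev.append r₂))
          (TransGen.trans_left ?_ hle') (hM ▸ .refl)
        have e1 : Conv.mu (fw.append (rev.append r₂)) =
            Conv.mu r₂ + (Conv.mu fw + Conv.mu rev) := by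
          simp only [Conv.mu_append]; abel
        have e2 : Conv.mu (Conv.consB h (Conv.consF h₂ r₂)) =
            Conv.mu r₂ + ((m, 0) ::ₘ {(m, 0)}) := by
          simp only [Conv.mu, ← Multiset.singleton_add]; abel
        rw [e1, e2]
        refine dm_main _ (by simp) _ _ ?_
        intro y hy
        simp only [Multiset.mem_add] at hy
        rcases hy with hy | hy
        · exact ⟨(m, 0), by simp, Lt'_left (gt_of (hfw y hy) h .refl)⟩
        · exact ⟨(m, 0), by simp, Lt'_left (gt_of (hrev y hy) h₂ .refl)⟩
      | single hv' =>
        refine finish (Conv.consB h rest) (fw.append (.consE hv' (rev.append r₂)))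
          (TransGen.trans_left ?_ hle') (hM ▸ .refl)
        have e1 : Conv.mu (fw.append (.consE hv' (rev.append r₂))) =
            Conv.mu r₂ + ((u, 1) ::ₘ (v, 1) ::ₘ (Conv.mu fw + Conv.mu rev)) := by
          simp only [Conv.mu, Conv.mu_append, ← Multiset.singleton_add]; abel
        have e2 : Conv.mu (Conv.consB h (Conv.consF h₂ r₂)) =
            Conv.mu r₂ + ((m, 0) ::ₘ {(m, 0)}) := by
          simp only [Conv.mu, ← Multiset.singleton_add]; abel
        rw [e1, e2]
        refine dm_main _ (by simp) _ _ ?_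
        intro y hy
        simp only [Multiset.mem_cons, Multiset.mem_add] at hy
        rcases hy with rfl | rfl | hy | hy
        · exact ⟨(m, 0), by simp, Lt'_left (gt_of hau h .refl)⟩
        · exact ⟨(m, 0), by simp, Lt'_left (gt_of hcv h₂ .refl)⟩
        · exact ⟨(m, 0), by simp, Lt'_left (gt_of (hfw y hy) h .refl)⟩
        · exact ⟨(m, 0), by simp, Lt'_left (gt_of (hrev y hy) h₂ .refl)⟩
    | @consE _ c₀ _ h₂ r₂ =>
      -- backward cliff: a ← m ~ c₀
      have hle' : ReflTransGen (CutExpand (Lt' ar lead))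
          (Conv.mu (Conv.consB h (Conv.consE h₂ r₂)))
          (Conv.mu (Conv.consB h rest)) := by
        simp only [Conv.mu]
        exact dmle_cons _ (by simpa [Conv.mu] using hle)
      rcases hii c₀ m a (hsym m c₀ h₂) h with ⟨v, hcv, hav⟩ | ⟨u, u', v, hcu, huu', hu'v, hav⟩
      · obtain ⟨fw, hfw⟩ := fwdConv hsub hav
        cases hcv with
        | refl =>
          refine finish (Conv.consB h rest) (fw.append r₂)
            (TransGen.trans_left ?_ hle') (hM ▸ .refl)
          have e1 : Conv.mu (fw.append r₂) = Conv.mu r₂ + Conv.mu fw := by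
            rw [Conv.mu_append]; exact add_comm _ _
          have e2 : Conv.mu (Conv.consB h (Conv.consE h₂ r₂)) =
              Conv.mu r₂ + ((m, 0) ::ₘ (m, 1) ::ₘ {(c₀, 1)}) := by
            simp only [Conv.mu, ← Multiset.singleton_add]; abel
          rw [e1, e2]
          refine dm_main _ (by simp) _ _ ?_
          intro y hy
          exact ⟨(m, 0), by simp, Lt'_left (gt_of (hfw y hy) h .refl)⟩
        | single hcv' =>
          refine finish (Conv.consB h rest) (fw.append (.consE (hsym _ _ hcv') r₂))
            (TransGen.trans_left ?_ hle') (hM ▸ .refl)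
          have e1 : Conv.mu (fw.append (.consE (hsym _ _ hcv') r₂)) =
              ((c₀, 1) ::ₘ Conv.mu r₂) + ((v, 1) ::ₘ Conv.mu fw) := by
            simp only [Conv.mu, Conv.mu_append, ← Multiset.singleton_add]; abel
          have e2 : Conv.mu (Conv.consB h (Conv.consE h₂ r₂)) =
              ((c₀, 1) ::ₘ Conv.mu r₂) + ((m, 0) ::ₘ {(m, 1)}) := by
            simp only [Conv.mu, ← Multiset.singleton_add]; abel
          rw [e1, e2]
          refine dm_main _ (by simp) _ _ ?_
          intro y hy
          simp only [Multiset.mem_cons] at hy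
          rcases hy with rfl | hy
          · exact ⟨(m, 0), by simp, Lt'_left (gt_of hav h .refl)⟩
          · exact ⟨(m, 0), by simp, Lt'_left (gt_of (hfw y hy) h .refl)⟩
      · obtain ⟨fw, hfw⟩ := fwdConv hsub hav
        obtain ⟨rev, hrev⟩ := bwdConv hsym hsub huu'
        cases hu'v with
        | refl =>
          refine finish (Conv.consB h rest)
            (fw.append (rev.append (.consB hcu r₂)))
            (TransGen.trans_left ?_ hle') (hM ▸ .refl)
          have e1 : Conv.mu (fw.append (rev.append (.consB hcu r₂))) =
              Conv.mu r₂ + (Conv.mu fw + ((c₀, 0) ::ₘ Conv.mu rev)) := by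
            simp only [Conv.mu, Conv.mu_append, ← Multiset.singleton_add]; abel
          have e2 : Conv.mu (Conv.consB h (Conv.consE h₂ r₂)) =
              Conv.mu r₂ + ((m, 0) ::ₘ (m, 1) ::ₘ {(c₀, 1)}) := by
            simp only [Conv.mu, ← Multiset.singleton_add]; abel
          rw [e1, e2]
          refine dm_main _ (by simp) _ _ ?_
          intro y hy
          simp only [Multiset.mem_cons, Multiset.mem_add] at hy
          rcases hy with hy | rfl | hy
          · exact ⟨(m, 0), by simp, Lt'_left (gt_of (hfw y hy) h .refl)⟩
          · exact ⟨(c₀, 1), by simp, Lt'_snd (by norm_num)⟩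
          · exact ⟨(c₀, 1), by simp, Lt'_left (gt_of (hrev y hy) hcu .refl)⟩
        | single hv'' =>
          refine finish (Conv.consB h rest)
            (fw.append (.consE (hsym _ _ hv'') (rev.append (.consB hcu r₂))))
            (TransGen.trans_left ?_ hle') (hM ▸ .refl)
          have e1 : Conv.mu (fw.append (.consE (hsym _ _ hv'')
              (rev.append (.consB hcu r₂)))) =
              Conv.mu r₂ + ((v, 1) ::ₘ (u', 1) ::ₘ (Conv.mu fw + ((c₀, 0) ::ₘ Conv.mu rev))) := by
            simp only [Conv.mu, Conv.mu_append, ← Multiset.singleton_add]; abel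
          have e2 : Conv.mu (Conv.consB h (Conv.consE h₂ r₂)) =
              Conv.mu r₂ + ((m, 0) ::ₘ (m, 1) ::ₘ {(c₀, 1)}) := by
            simp only [Conv.mu, ← Multiset.singleton_add]; abel
          rw [e1, e2]
          refine dm_main _ (by simp) _ _ ?_
          intro y hy
          simp only [Multiset.mem_cons, Multiset.mem_add] at hy
          rcases hy with rfl | rfl | hy | rfl | hy
          · exact ⟨(m, 0), by simp, Lt'_left (gt_of hav h .refl)⟩
          · exact ⟨(c₀, 1), by simp, Lt'_left (gt_of huu' hcu .refl)⟩
          · exact ⟨(m, 0), by simp, Lt'_left (gt_of (hfw y hy) h .refl)⟩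
          · exact ⟨(c₀, 1), by simp, Lt'_snd (by norm_num)⟩
          · exact ⟨(c₀, 1), by simp, Lt'_left (gt_of (hrev y hy) hcu .refl)⟩

end Main

lemma initConv {hd ar : A → A → Prop} {a b : A}
    (h : ReflTransGen (fun x y => ar x y ∨ ar y x ∨ hd x y) a b) :
    ∃ _ : Conv hd ar a b, True := by
  induction h using ReflTransGen.head_induction_on with
  | refl => exact ⟨.nil, trivial⟩
  | head hs _ ih =>
    obtain ⟨c, -⟩ := ih
    rcases hs with h1 | h2 | h3
    exacts [⟨.consF h1 c, trivial⟩, ⟨.consB h2 c, trivial⟩, ⟨.consE h3 c, trivial⟩]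

end CRMProof

/-- Theorem 2.3 (abstract criteria for CRM).  `hd` is `⊢⊣`, `ar` is `→`,
`lead` is `⤳`; `⇒ = ⤳ ∪ →`. -/
theorem abstract_crm_criterion {A : Type*} (hd ar lead : A → A → Prop)
    (hsym : ∀ a b, hd a b → hd b a)
    (hsub : ∀ a b, lead a b → hd a b)
    (hwf : ¬ ∃ f : ℕ → A, ∀ n,
      Relation.Comp ar (Relation.ReflTransGen lead) (f n) (f (n + 1)))
    (hi : ∀ a b c, ar b a → ar b c →
      ∃ u v, Relation.ReflTransGen (fun x y => lead x y ∨ ar x y) a u ∧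
        Relation.ReflGen hd u v ∧
        Relation.ReflTransGen (fun x y => lead x y ∨ ar x y) c v)
    (hii : ∀ a b c, hd a b → ar b c →
      (∃ v, Relation.ReflGen hd a v ∧
        Relation.ReflTransGen (fun x y => lead x y ∨ ar x y) c v) ∨
      (∃ u u' v, ar a u ∧
        Relation.ReflTransGen (fun x y => lead x y ∨ ar x y) u u' ∧
        Relation.ReflGen hd u' v ∧
        Relation.ReflTransGen (fun x y => lead x y ∨ ar x y) c v)) :
    ∀ a b, Relation.ReflTransGen (fun x y => ar x y ∨ ar y x ∨ hd x y) a b →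
      ∃ u v, Relation.ReflTransGen ar a u ∧ Relation.ReflTransGen hd u v ∧
        Relation.ReflTransGen ar b v := by
  intro a b hab
  obtain ⟨c, -⟩ := CRMProof.initConv (hd := hd) (ar := ar) hab
  obtain ⟨c', hv, -⟩ :=
    CRMProof.mainLem hsym hsub hwf hi hii (CRMProof.Conv.mu c) a b c rfl
  exact CRMProof.Conv.isv_sound c' hv
end

section
/- Let ⊢⊣, →, ⤳ be relations on a set A such that ⊢⊣ is symmetric, ⤳ ⊆ ⊢⊣, and → ∘ ⤳* is well-founded. Let ⇒ = → ∪ ⤳ and let ⇐ be the inverse of ⇒. Suppose (i) ← ∘ → ⊆ ⇒* ∘ ⊢⊣= ∘ ⇐*, and (ii) ⊢⊣ ∘ → ⊆ → ∘ ⇒* ∘ ⊢⊣= ∘ ⇐*. Then → is Church-Rosser modulo ⊢⊣*. -/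
/-!
Label every step of a conversion: a rewrite step by its source, a `⊢⊣`-step by its endpoints,
and compare label multisets in the multiset extension of the well-founded order
`(→ ∘ ⤳*)⁺`. A conversion that is not a valley `→* ⊢⊣* ←*` contains a peak `← →`, `⊢⊣ →`
or `← ⊢⊣`, and (i) resp. (ii) replace it by a conversion with smaller labels: apart from the
leading `→` provided by (ii), every new label is reached from a label of the peak by
`→ ∘ ⇒*`, hence lies below it. Well-founded induction on the labels turns every conversion
into a valley.
-/

open Relation Function

namespace Relation

variable {α : Type*} {r : α → α → Prop}

theorem reflTransGen_cutExpand_add_left (s : Multiset α) {t u : Multiset α}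
    (h : ReflTransGen (CutExpand r) t u) : ReflTransGen (CutExpand r) (s + t) (s + u) :=
  h.lift (s + ·) fun _ _ h => (cutExpand_add_left s).2 h

theorem transGen_cutExpand_add_left (s : Multiset α) {t u : Multiset α}
    (h : TransGen (CutExpand r) t u) : TransGen (CutExpand r) (s + t) (s + u) :=
  h.lift (s + ·) fun _ _ h => (cutExpand_add_left s).2 h

theorem transGen_cutExpand_add_right (s : Multiset α) {t u : Multiset α}
    (h : TransGen (CutExpand r) t u) : TransGen (CutExpand r) (t + s) (u + s) :=
  h.lift (· + s) fun _ _ h => (cutExpand_add_right s).2 h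

theorem transGen_cutExpand_of_forall_exists_rel {X Y : Multiset α} (hX : X ≠ 0)
    (h : ∀ y ∈ Y, ∃ x ∈ X, r y x) : TransGen (CutExpand r) Y X := by
  classical
  induction X using Multiset.induction_on generalizing Y with
  | empty => exact absurd rfl hX
  | cons x X ih =>
    have hY := Multiset.filter_add_not (r · x) Y
    set Y₁ := Y.filter (r · x)
    set Y₂ := Y.filter (¬ r · x)
    have hY₂ : ∀ y ∈ Y₂, ∃ x' ∈ X, r y x' := by
      intro y hy
      obtain ⟨hyY, hyx⟩ := Multiset.mem_filter.1 hy
      obtain ⟨x', hx', hyx'⟩ := h y hyY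
      rcases Multiset.mem_cons.1 hx' with rfl | hx'
      · exact absurd hyx' hyx
      · exact ⟨x', hx', hyx'⟩
    have hcut : CutExpand r (Y₁ + X) (x ::ₘ X) := by
      rw [← Multiset.singleton_add]
      exact (cutExpand_add_right X).2
        (cutExpand_singleton fun y hy => (Multiset.mem_filter.1 hy).2)
    rw [← hY]
    rcases eq_or_ne X 0 with rfl | hX
    · have hY₂0 : Y₂ = 0 := Multiset.eq_zero_of_forall_notMem fun y hy => by
        simpa using hY₂ y hy
      simpa [hY₂0] using TransGen.single hcut
    · exact (transGen_cutExpand_add_left Y₁ (ih hX hY₂)).tail hcut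

theorem transGen_cutExpand_add_of_ne_zero {s : Multiset α} (hs : s ≠ 0) (t : Multiset α) :
    TransGen (CutExpand r) t (s + t) := by
  simpa using transGen_cutExpand_add_right t
    (transGen_cutExpand_of_forall_exists_rel (r := r) (Y := 0) hs (by simp))

end Relation

namespace ChurchRosserModulo

variable {A : Type*} {ar hd lead : A → A → Prop}

def Below (ar lead : A → A → Prop) : A → A → Prop :=
  TransGen (swap (Comp ar (ReflTransGen lead)))

theorem wellFounded_below
    (hwf : ¬ ∃ f : ℕ → A, ∀ n, Comp ar (ReflTransGen lead) (f n) (f (n + 1))) :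
    WellFounded (Below ar lead) :=
  (wellFounded_iff_isEmpty_descending_chain.2 ⟨fun ⟨f, hf⟩ => hwf ⟨f, hf⟩⟩).transGen

theorem transGen_comp_of_reflTransGen {c q p : A} (hcq : Comp ar (ReflTransGen lead) c q)
    (hqp : ReflTransGen (fun x y => ar x y ∨ lead x y) q p) :
    TransGen (Comp ar (ReflTransGen lead)) c p := by
  induction hqp using ReflTransGen.head_induction_on generalizing c with
  | refl => exact .single hcq
  | head hstep _ ih =>
    obtain ⟨m, hcm, hmq⟩ := hcq
    rcases hstep with har | hlead
    · exact .head ⟨m, hcm, hmq⟩ (ih ⟨_, har, .refl⟩)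
    · exact ih ⟨m, hcm, hmq.tail hlead⟩

theorem below_of_ar_of_reflTransGen {c q p : A} (hcq : ar c q)
    (hqp : ReflTransGen (fun x y => ar x y ∨ lead x y) q p) : Below ar lead p c :=
  transGen_swap.2 (transGen_comp_of_reflTransGen ⟨q, hcq, .refl⟩ hqp)

def ModJoin (ar lead hd : A → A → Prop) (a b : A) : Prop :=
  ∃ u v, ReflTransGen (fun x y => ar x y ∨ lead x y) a u ∧ ReflGen hd u v ∧
    ReflTransGen (fun x y => ar x y ∨ lead x y) b v

theorem ModJoin.symm (hsym : ∀ a b, hd a b → hd b a) {a b : A} (h : ModJoin ar lead hd a b) :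
    ModJoin ar lead hd b a := by
  obtain ⟨u, v, hau, huv, hbv⟩ := h
  refine ⟨v, u, hbv, ?_, hau⟩
  cases huv with
  | refl => exact .refl
  | single h => exact .single (hsym _ _ h)

inductive Conversion (ar hd : A → A → Prop) : A → A → Type _
  | nil (a : A) : Conversion ar hd a a
  | fwd {a c b : A} : ar a c → Conversion ar hd c b → Conversion ar hd a b
  | bwd {a c b : A} : ar c a → Conversion ar hd c b → Conversion ar hd a b
  | eqv {a c b : A} : hd a c → Conversion ar hd c b → Conversion ar hd a b

namespace Conversion

/-- A rewrite step is labelled by its source; an `hd`-step counts both endpoints twice, so that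
it outweighs a rewrite step leaving either endpoint. -/
def labels : {a b : A} → Conversion ar hd a b → Multiset A
  | _, _, nil _ => 0
  | _, _, fwd (a := a) _ t => {a} + t.labels
  | _, _, bwd (c := c) _ t => {c} + t.labels
  | _, _, eqv (a := a) (c := c) _ t => {a, a, c, c} + t.labels

def append : {a b c : A} → Conversion ar hd a b → Conversion ar hd b c → Conversion ar hd a c
  | _, _, _, nil _, D => D
  | _, _, _, fwd h t, D => fwd h (t.append D)
  | _, _, _, bwd h t, D => bwd h (t.append D)
  | _, _, _, eqv h t, D => eqv h (t.append D)

@[simp]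
theorem labels_append {a b c : A} (C : Conversion ar hd a b) (D : Conversion ar hd b c) :
    (C.append D).labels = C.labels + D.labels := by
  induction C with
  | nil => simp [append, labels]
  | fwd _ _ ih | bwd _ _ ih | eqv _ _ ih => simp [append, labels, ih]

def symm (hsym : ∀ a b, hd a b → hd b a) :
    {a b : A} → Conversion ar hd a b → Conversion ar hd b a
  | _, _, nil a => nil a
  | _, _, fwd h t => (t.symm hsym).append (bwd h (nil _))
  | _, _, bwd h t => (t.symm hsym).append (fwd h (nil _))
  | _, _, eqv h t => (t.symm hsym).append (eqv (hsym _ _ h) (nil _))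

@[simp]
theorem labels_symm (hsym : ∀ a b, hd a b → hd b a) {a b : A} (C : Conversion ar hd a b) :
    (C.symm hsym).labels = C.labels := by
  induction C with
  | nil => rfl
  | fwd _ _ ih | bwd _ _ ih => simp [symm, labels, ih, add_comm]
  | eqv _ _ ih =>
    simp only [symm, labels_append, ih, labels, add_zero, Multiset.insert_eq_cons,
      ← Multiset.singleton_add]
    abel

def IsBwd : {a b : A} → Conversion ar hd a b → Prop
  | _, _, nil _ => True
  | _, _, bwd _ t => t.IsBwd
  | _, _, _ => False

def IsEqvBwd : {a b : A} → Conversion ar hd a b → Prop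
  | _, _, eqv _ t => t.IsEqvBwd
  | _, _, t => t.IsBwd

def IsValley : {a b : A} → Conversion ar hd a b → Prop
  | _, _, fwd _ t => t.IsValley
  | _, _, t => t.IsEqvBwd

theorem IsBwd.reflTransGen {a b : A} {C : Conversion ar hd a b} (hC : C.IsBwd) :
    ReflTransGen ar b a := by
  induction C with
  | nil => exact .refl
  | bwd h _ ih => exact (ih hC).tail h
  | fwd | eqv => exact hC.elim

theorem IsEqvBwd.exists {a b : A} {C : Conversion ar hd a b} (hC : C.IsEqvBwd) :
    ∃ v, ReflTransGen hd a v ∧ ReflTransGen ar b v := by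
  induction C with
  | eqv h _ ih =>
    obtain ⟨v, hav, hbv⟩ := ih hC
    exact ⟨v, hav.head h, hbv⟩
  | nil | bwd => exact ⟨_, .refl, IsBwd.reflTransGen hC⟩
  | fwd => exact hC.elim

theorem IsValley.exists {a b : A} {C : Conversion ar hd a b} (hC : C.IsValley) :
    ∃ u v, ReflTransGen ar a u ∧ ReflTransGen hd u v ∧ ReflTransGen ar b v := by
  induction C with
  | fwd h _ ih =>
    obtain ⟨u, v, hau, huv, hbv⟩ := ih hC
    exact ⟨u, v, hau.head h, huv, hbv⟩
  | nil | bwd | eqv =>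
    obtain ⟨v, hav, hbv⟩ := IsEqvBwd.exists hC
    exact ⟨_, v, .refl, hav, hbv⟩

theorem exists_labels_reachable_of_reflTransGen (hsub : ∀ a b, lead a b → hd a b) {a b : A}
    (h : ReflTransGen (fun x y => ar x y ∨ lead x y) a b) :
    ∃ C : Conversion ar hd a b,
      ∀ x ∈ C.labels, ReflTransGen (fun x y => ar x y ∨ lead x y) a x := by
  induction h using ReflTransGen.head_induction_on with
  | refl => exact ⟨nil _, by simp [labels]⟩
  | @head a a' hstep _ ih =>
    obtain ⟨C, hC⟩ := ih
    have hreach : ∀ x ∈ C.labels, ReflTransGen (fun x y => ar x y ∨ lead x y) a x :=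
      fun x hx => (hC x hx).head hstep
    rcases hstep with har | hlead
    · refine ⟨fwd har C, fun x hx => ?_⟩
      simp only [labels, Multiset.mem_add, Multiset.mem_singleton] at hx
      rcases hx with rfl | hx
      exacts [.refl, hreach x hx]
    · refine ⟨eqv (hsub _ _ hlead) C, fun x hx => ?_⟩
      simp only [labels, Multiset.mem_add, Multiset.insert_eq_cons, Multiset.mem_cons,
        Multiset.mem_singleton] at hx
      rcases hx with (rfl | rfl | rfl | rfl) | hx
      exacts [.refl, .refl, .single (.inr hlead), .single (.inr hlead), hreach x hx]

theorem exists_labels_reachable_of_modJoin (hsym : ∀ a b, hd a b → hd b a)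
    (hsub : ∀ a b, lead a b → hd a b)
    {a d : A} (h : ModJoin ar lead hd a d) :
    ∃ C : Conversion ar hd a d, ∀ x ∈ C.labels,
      ReflTransGen (fun x y => ar x y ∨ lead x y) a x ∨
        ReflTransGen (fun x y => ar x y ∨ lead x y) d x := by
  obtain ⟨u, v, hau, huv, hdv⟩ := h
  obtain ⟨F, hF⟩ := exists_labels_reachable_of_reflTransGen (hd := hd) hsub hau
  obtain ⟨G, hG⟩ := exists_labels_reachable_of_reflTransGen (hd := hd) hsub hdv
  obtain ⟨E, hE⟩ : ∃ E : Conversion ar hd u v, ∀ x ∈ E.labels, x = u ∨ x = v := by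
    cases huv with
    | refl => exact ⟨nil _, by simp [labels]⟩
    | single h => exact ⟨eqv h (nil _), by simp [labels]⟩
  refine ⟨F.append (E.append (G.symm hsym)), fun x hx => ?_⟩
  simp only [labels_append, labels_symm, Multiset.mem_add] at hx
  rcases hx with hx | hx | hx
  · exact .inl (hF x hx)
  · rcases hE x hx with rfl | rfl
    exacts [.inl hau, .inr hdv]
  · exact .inr (hG x hx)

theorem exists_labels_lt_of_bwd_fwd (hsym : ∀ a b, hd a b → hd b a)
    (hsub : ∀ a b, lead a b → hd a b) {a c d : A} (hca : ar c a) (hcd : ar c d)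
    (hj : ModJoin ar lead hd a d) :
    ∃ C : Conversion ar hd a d, TransGen (CutExpand (Below ar lead)) C.labels ({c} + {c}) := by
  obtain ⟨C, hC⟩ := exists_labels_reachable_of_modJoin hsym hsub hj
  refine ⟨C, transGen_cutExpand_of_forall_exists_rel (by simp) fun x hx => ⟨c, by simp, ?_⟩⟩
  rcases hC x hx with h | h
  exacts [below_of_ar_of_reflTransGen hca h, below_of_ar_of_reflTransGen hcd h]

theorem exists_labels_lt_of_eqv_fwd (hsym : ∀ a b, hd a b → hd b a)
    (hsub : ∀ a b, lead a b → hd a b) {a c d u : A} (hau : ar a u) (hcd : ar c d)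
    (hj : ModJoin ar lead hd u d) :
    ∃ C : Conversion ar hd a d,
      TransGen (CutExpand (Below ar lead)) C.labels ({a, a, c, c} + {c}) := by
  obtain ⟨C, hC⟩ := exists_labels_reachable_of_modJoin hsym hsub hj
  refine ⟨fwd hau C, ?_⟩
  have hsplit : ({a, a, c, c} + {c} : Multiset A) = {a} + ({a, c, c} + {c}) := by
    simp only [Multiset.insert_eq_cons, ← Multiset.singleton_add]
    abel
  rw [labels, hsplit]
  refine transGen_cutExpand_add_left _ (transGen_cutExpand_of_forall_exists_rel (by simp)
    fun x hx => ?_)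
  rcases hC x hx with h | h
  exacts [⟨a, by simp, below_of_ar_of_reflTransGen hau h⟩,
    ⟨c, by simp, below_of_ar_of_reflTransGen hcd h⟩]

theorem exists_labels_lt_of_bwd_eqv (hsym : ∀ a b, hd a b → hd b a)
    (hsub : ∀ a b, lead a b → hd a b) {a c d u : A} (hca : ar c a) (hdu : ar d u)
    (hj : ModJoin ar lead hd a u) :
    ∃ C : Conversion ar hd a d,
      TransGen (CutExpand (Below ar lead)) C.labels ({c} + {c, c, d, d}) := by
  obtain ⟨C, hC⟩ := exists_labels_reachable_of_modJoin hsym hsub hj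
  refine ⟨C.append (bwd hdu (nil d)), ?_⟩
  have hsplit : ({c} + {c, c, d, d} : Multiset A) = {c, c, c, d} + {d} := by
    simp only [Multiset.insert_eq_cons, ← Multiset.singleton_add]
    abel
  rw [labels_append, hsplit]
  refine transGen_cutExpand_add_right _ (transGen_cutExpand_of_forall_exists_rel (by simp)
    fun x hx => ?_)
  rcases hC x hx with h | h
  exacts [⟨c, by simp, below_of_ar_of_reflTransGen hca h⟩,
    ⟨d, by simp, below_of_ar_of_reflTransGen hdu h⟩]

variable (lead) in
def HasLowerValley {a b : A} (C : Conversion ar hd a b) : Prop :=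
  ∃ V : Conversion ar hd a b, V.IsValley ∧
    ReflTransGen (CutExpand (Below ar lead)) V.labels C.labels

theorem HasLowerValley.mono {a b : A} {C D : Conversion ar hd a b} (hD : D.HasLowerValley lead)
    (hDC : ReflTransGen (CutExpand (Below ar lead)) D.labels C.labels) :
    C.HasLowerValley lead :=
  let ⟨V, hV, hVD⟩ := hD
  ⟨V, hV, hVD.trans hDC⟩

/-- The inductive step: normalise the tail, then remove the peak the first step may form with it. -/
theorem hasLowerValley_of_forall_labels_lt (hsym : ∀ a b, hd a b → hd b a)
    (hsub : ∀ a b, lead a b → hd a b)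
    (hi : ∀ a b c, ar b a → ar b c → ModJoin ar lead hd a c)
    (hii : ∀ a b c, hd a b → ar b c → ∃ u, ar a u ∧ ModJoin ar lead hd u c)
    {a b : A} (C : Conversion ar hd a b)
    (ih : ∀ {a' b' : A} (D : Conversion ar hd a' b'),
      TransGen (CutExpand (Below ar lead)) D.labels C.labels → D.HasLowerValley lead) :
    C.HasLowerValley lead := by
  have reduce : ∀ {d : A} (L : Multiset A) (P : Conversion ar hd a d) (t : Conversion ar hd d b),
      TransGen (CutExpand (Below ar lead)) P.labels L →
      ReflTransGen (CutExpand (Below ar lead)) (L + t.labels) C.labels →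
      C.HasLowerValley lead := by
    intro d L P t hP hle
    have hlt : TransGen (CutExpand (Below ar lead)) (P.append t).labels C.labels := by
      rw [labels_append]
      exact (transGen_cutExpand_add_right _ hP).trans_left hle
    exact (ih _ hlt).mono hlt.to_reflTransGen
  cases C with
  | nil => exact ⟨nil _, trivial, .refl⟩
  | fwd hac t =>
    obtain ⟨V, hV, hVt⟩ := ih t (transGen_cutExpand_add_of_ne_zero (by simp) _)
    exact ⟨fwd hac V, hV, reflTransGen_cutExpand_add_left _ hVt⟩
  | @eqv _ c _ hac t =>
    obtain ⟨V, hV, hVt⟩ := ih t (transGen_cutExpand_add_of_ne_zero (by simp) _)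
    have hle := reflTransGen_cutExpand_add_left {a, a, c, c} hVt
    have hvalley (hV' : V.IsEqvBwd) : (eqv hac t).HasLowerValley lead := ⟨eqv hac V, hV', hle⟩
    cases V with
    | fwd hcd t' =>
      obtain ⟨u, hau, hj⟩ := hii _ _ _ hac hcd
      obtain ⟨P, hP⟩ := exists_labels_lt_of_eqv_fwd hsym hsub hau hcd hj
      exact reduce _ P t' hP (by rw [add_assoc]; exact hle)
    | _ => exact hvalley hV
  | @bwd _ c _ hca t =>
    obtain ⟨V, hV, hVt⟩ := ih t (transGen_cutExpand_add_of_ne_zero (by simp) _)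
    have hle := reflTransGen_cutExpand_add_left {c} hVt
    have hvalley (hV' : V.IsBwd) : (bwd hca t).HasLowerValley lead := ⟨bwd hca V, hV', hle⟩
    cases V with
    | fwd hcd t' =>
      obtain ⟨P, hP⟩ := exists_labels_lt_of_bwd_fwd hsym hsub hca hcd (hi _ _ _ hca hcd)
      exact reduce _ P t' hP (by rw [add_assoc]; exact hle)
    | eqv hcd t' =>
      obtain ⟨u, hdu, hj⟩ := hii _ _ _ (hsym _ _ hcd) hca
      obtain ⟨P, hP⟩ := exists_labels_lt_of_bwd_eqv hsym hsub hca hdu (hj.symm hsym)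
      exact reduce _ P t' hP (by rw [add_assoc]; exact hle)
    | _ => exact hvalley hV

theorem hasLowerValley (hsym : ∀ a b, hd a b → hd b a) (hsub : ∀ a b, lead a b → hd a b)
    (hwf : WellFounded (Below ar lead))
    (hi : ∀ a b c, ar b a → ar b c → ModJoin ar lead hd a c)
    (hii : ∀ a b c, hd a b → ar b c → ∃ u, ar a u ∧ ModJoin ar lead hd u c)
    {a b : A} (C : Conversion ar hd a b) : C.HasLowerValley lead := by
  induction hM : C.labels using hwf.cutExpand.transGen.induction generalizing a b C with
  | _ M ih =>
    subst hM
    exact hasLowerValley_of_forall_labels_lt hsym hsub hi hii C fun D hD => ih _ hD D rfl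

theorem nonempty_of_reflTransGen {a b : A}
    (h : ReflTransGen (fun x y => ar x y ∨ ar y x ∨ hd x y) a b) :
    Nonempty (Conversion ar hd a b) := by
  induction h using ReflTransGen.head_induction_on with
  | refl => exact ⟨nil _⟩
  | head hstep _ ih =>
    obtain ⟨C⟩ := ih
    rcases hstep with h | h | h
    exacts [⟨fwd h C⟩, ⟨bwd h C⟩, ⟨eqv h C⟩]

end Conversion

end ChurchRosserModulo

open ChurchRosserModulo in
/-- Corollary 2.5.  `hd` is `⊢⊣`, `ar` is `→`, `lead` is `⤳`; `⇒ = → ∪ ⤳`. -/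
theorem crm_criterion_variant {A : Type*} (hd ar lead : A → A → Prop)
    (hsym : ∀ a b, hd a b → hd b a)
    (hsub : ∀ a b, lead a b → hd a b)
    (hwf : ¬ ∃ f : ℕ → A, ∀ n,
      Relation.Comp ar (Relation.ReflTransGen lead) (f n) (f (n + 1)))
    (hi : ∀ a b c, ar b a → ar b c →
      ∃ u v, Relation.ReflTransGen (fun x y => ar x y ∨ lead x y) a u ∧
        Relation.ReflGen hd u v ∧
        Relation.ReflTransGen (fun x y => ar x y ∨ lead x y) c v)
    (hii : ∀ a b c, hd a b → ar b c →
      ∃ u u' v, ar a u ∧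
        Relation.ReflTransGen (fun x y => ar x y ∨ lead x y) u u' ∧
        Relation.ReflGen hd u' v ∧
        Relation.ReflTransGen (fun x y => ar x y ∨ lead x y) c v) :
    ∀ a b, Relation.ReflTransGen (fun x y => ar x y ∨ ar y x ∨ hd x y) a b →
      ∃ u v, Relation.ReflTransGen ar a u ∧ Relation.ReflTransGen hd u v ∧
        Relation.ReflTransGen ar b v := by
  intro a b hab
  obtain ⟨C⟩ := Conversion.nonempty_of_reflTransGen hab
  have hii' : ∀ a b c, hd a b → ar b c → ∃ u, ar a u ∧ ModJoin ar lead hd u c :=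
    fun a b c hab hbc =>
      let ⟨u, u', v, hau, huu', hu'v, hcv⟩ := hii a b c hab hbc
      ⟨u, hau, u', v, huu', hu'v, hcv⟩
  obtain ⟨V, hV, -⟩ := C.hasLowerValley hsym hsub (wellFounded_below hwf) hi hii'
  exact hV.exists
end

section
/- Let ⊢⊣, → be relations on a set A such that ⊢⊣ is symmetric and → ∘ ⊢⊣* is well-founded. Then → is Church-Rosser modulo ⊢⊣* if and only if both (i) ← ∘ → ⊆ →* ∘ ⊢⊣* ∘ ←*, and (ii) ⊢⊣ ∘ → ⊆ →* ∘ ⊢⊣* ∘ ←*. -/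
/-!
By well-founded induction along `t ~* · → s`, every `t` is confluent modulo `~`: any two
`→* ∘ ~*`-reducts of `t` are joinable modulo `~`. If both reducts start with a rewrite step,
the peak is closed by (i) and the induction hypothesis at the two successors of `t`; if one of
them is only `~*`-equivalent to `t`, walk along the `~`-chain, closing each cliff by (ii) and the
induction hypothesis. Confluence modulo `~` at every point makes joinability modulo `~`
transitive, so it is an equivalence relation; since it contains `⋈`, it contains `⋈*`.
-/

namespace Relation

variable {α : Type*} {r e : α → α → Prop}

def JoinModulo (r e : α → α → Prop) (a b : α) : Prop :=
  ∃ u v, ReflTransGen r a u ∧ ReflTransGen e u v ∧ ReflTransGen r b v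

def ConfluentModuloAt (r e : α → α → Prop) (t : α) : Prop :=
  ∀ x y, Comp (ReflTransGen r) (ReflTransGen e) t x →
    Comp (ReflTransGen r) (ReflTransGen e) t y → JoinModulo r e x y

namespace JoinModulo

theorem refl (a : α) : JoinModulo r e a a := ⟨a, a, .refl, .refl, .refl⟩

theorem symm [Std.Symm e] {a b : α} (h : JoinModulo r e a b) : JoinModulo r e b a :=
  let ⟨u, v, hau, huv, hbv⟩ := h
  ⟨v, u, hbv, _root_.symm huv, hau⟩

theorem head {a a' b : α} (h : ReflTransGen r a a') (h' : JoinModulo r e a' b) :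
    JoinModulo r e a b :=
  let ⟨u, v, ha'u, huv, hbv⟩ := h'
  ⟨u, v, h.trans ha'u, huv, hbv⟩

theorem trans [Std.Symm e] (h : ∀ t, ConfluentModuloAt r e t) {a b c : α}
    (hab : JoinModulo r e a b) (hbc : JoinModulo r e b c) : JoinModulo r e a c := by
  obtain ⟨u, v, hau, huv, hbv⟩ := hab
  obtain ⟨p, q, hbp, hpq, hcq⟩ := hbc
  obtain ⟨v', q', hvv', hv'q', hqq'⟩ := h b v q ⟨v, hbv, .refl⟩ ⟨p, hbp, hpq⟩
  obtain ⟨u', w, huu', hu'w, hq'w⟩ := h v u q' ⟨v, .refl, _root_.symm huv⟩ ⟨v', hvv', hv'q'⟩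
  exact ⟨u', w, hau.trans huu', hu'w, hcq.trans (hqq'.trans hq'w)⟩

end JoinModulo

theorem equivalence_joinModulo [Std.Symm e] (h : ∀ t, ConfluentModuloAt r e t) :
    Equivalence (JoinModulo r e) :=
  ⟨JoinModulo.refl, JoinModulo.symm, JoinModulo.trans h⟩

theorem wellFounded_flip_reflTransGen_comp
    (hwf : ¬ ∃ f : ℕ → α, ∀ n, Comp r (ReflTransGen e) (f n) (f (n + 1))) :
    WellFounded (flip (Comp (ReflTransGen e) r)) := by
  refine wellFounded_iff_isEmpty_descending_chain.mpr ⟨fun ⟨f, hf⟩ => hwf ?_⟩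
  choose z hz using hf
  exact ⟨z, fun n => ⟨f (n + 1), (hz n).2, (hz (n + 1)).1⟩⟩

theorem joinModulo_of_reflTransGen_of_comp [Std.Symm e]
    (hcoh : ∀ a b c, e a b → r b c → JoinModulo r e a c) {t x y : α}
    (ih : ∀ s, Comp (ReflTransGen e) r t s → ConfluentModuloAt r e s)
    (hx : ReflTransGen e t x) (hy : Comp (ReflTransGen r) (ReflTransGen e) t y) :
    JoinModulo r e x y := by
  induction hx with
  | refl =>
    obtain ⟨y', hty', hy'y⟩ := hy
    exact ⟨y', y, hty', hy'y, .refl⟩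
  | @tail x₁ x htx₁ hx₁x ihx =>
    obtain ⟨p, q, hx₁p, hpq, hyq⟩ := ihx
    rcases hx₁p.cases_head with rfl | ⟨p₁, hx₁p₁, hp₁p⟩
    · exact ⟨x, q, .refl, .head (symm hx₁x) hpq, hyq⟩
    obtain ⟨x', s, hxx', hx's, hp₁s⟩ := hcoh x x₁ p₁ (symm hx₁x) hx₁p₁
    obtain ⟨x'', q', hx'x'', hx''q', hqq'⟩ :=
      ih p₁ ⟨x₁, htx₁, hx₁p₁⟩ x' q ⟨s, hp₁s, symm hx's⟩ ⟨p, hp₁p, hpq⟩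
    exact ⟨x'', q', hxx'.trans hx'x'', hx''q', hyq.trans hqq'⟩

theorem joinModulo_of_peak [Std.Symm e]
    (hconf : ∀ a b c, r b a → r b c → JoinModulo r e a c) {t t₁ t₂ x y : α}
    (ih : ∀ s, Comp (ReflTransGen e) r t s → ConfluentModuloAt r e s)
    (ht₁ : r t t₁) (ht₂ : r t t₂) (hx : Comp (ReflTransGen r) (ReflTransGen e) t₁ x)
    (hy : Comp (ReflTransGen r) (ReflTransGen e) t₂ y) : JoinModulo r e x y := by
  obtain ⟨p, q, ht₁p, hpq, ht₂q⟩ := hconf t₁ t t₂ ht₁ ht₂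
  obtain ⟨x₂, q₂, hxx₂, hx₂q₂, hqq₂⟩ := ih t₁ ⟨t, .refl, ht₁⟩ x q hx ⟨p, ht₁p, hpq⟩
  exact .head hxx₂ (ih t₂ ⟨t, .refl, ht₂⟩ x₂ y ⟨q₂, ht₂q.trans hqq₂, symm hx₂q₂⟩ hy)

theorem confluentModuloAt [Std.Symm e] (hwf : WellFounded (flip (Comp (ReflTransGen e) r)))
    (hconf : ∀ a b c, r b a → r b c → JoinModulo r e a c)
    (hcoh : ∀ a b c, e a b → r b c → JoinModulo r e a c) (t : α) :
    ConfluentModuloAt r e t := by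
  induction t using hwf.induction with
  | _ t ih =>
  rintro x y ⟨x', htx', hx'x⟩ ⟨y', hty', hy'y⟩
  rcases htx'.cases_head with rfl | ⟨t₁, ht₁, ht₁x'⟩
  · exact joinModulo_of_reflTransGen_of_comp hcoh ih hx'x ⟨y', hty', hy'y⟩
  rcases hty'.cases_head with rfl | ⟨t₂, ht₂, ht₂y'⟩
  · exact (joinModulo_of_reflTransGen_of_comp hcoh ih hy'y ⟨x', htx', hx'x⟩).symm
  exact joinModulo_of_peak hconf ih ht₁ ht₂ ⟨x', ht₁x', hx'x⟩ ⟨y', ht₂y', hy'y⟩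

theorem reflTransGen_le_joinModulo [Std.Symm e]
    (hwf : WellFounded (flip (Comp (ReflTransGen e) r)))
    (hconf : ∀ a b c, r b a → r b c → JoinModulo r e a c)
    (hcoh : ∀ a b c, e a b → r b c → JoinModulo r e a c) :
    ReflTransGen (fun x y => r x y ∨ r y x ∨ e x y) ≤ JoinModulo r e := by
  refine reflTransGen_le_of_equivalence_of_le
    (equivalence_joinModulo (confluentModuloAt hwf hconf hcoh)) fun a b h => ?_
  rcases h with h | h | h
  · exact ⟨b, b, .single h, .refl, .refl⟩
  · exact ⟨a, a, .refl, .refl, .single h⟩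
  · exact ⟨a, b, .refl, .single h, .refl⟩

end Relation

/-- Corollary 2.9 (Lemma 2.8 of Huet 1980). -/
theorem crm_iff_huet {A : Type*} (hd ar : A → A → Prop)
    (hsym : ∀ a b, hd a b → hd b a)
    (hwf : ¬ ∃ f : ℕ → A, ∀ n,
      Relation.Comp ar (Relation.ReflTransGen hd) (f n) (f (n + 1))) :
    (∀ a b, Relation.ReflTransGen (fun x y => ar x y ∨ ar y x ∨ hd x y) a b →
      ∃ u v, Relation.ReflTransGen ar a u ∧ Relation.ReflTransGen hd u v ∧
        Relation.ReflTransGen ar b v)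
    ↔
    ((∀ a b c, ar b a → ar b c →
      ∃ u v, Relation.ReflTransGen ar a u ∧ Relation.ReflTransGen hd u v ∧
        Relation.ReflTransGen ar c v) ∧
     (∀ a b c, hd a b → ar b c →
      ∃ u v, Relation.ReflTransGen ar a u ∧ Relation.ReflTransGen hd u v ∧
        Relation.ReflTransGen ar c v)) := by
  have : Std.Symm hd := ⟨hsym⟩
  refine ⟨fun hcr => ⟨fun a b c hba hbc => hcr a c ?_, fun a b c hab hbc => hcr a c ?_⟩,
    fun ⟨hconf, hcoh⟩ => Relation.reflTransGen_le_joinModulo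
      (Relation.wellFounded_flip_reflTransGen_comp hwf) hconf hcoh⟩
  · exact .head (Or.inr (Or.inl hba)) (.single (Or.inl hbc))
  · exact .head (Or.inr (Or.inr hab)) (.single (Or.inl hbc))
end

section
/- Let ⊢⊣, → be relations on a set A such that ⊢⊣ is symmetric and → ∘ ⊢⊣* is well-founded, and let ▶ be a relation on A satisfying → ⊆ ▶ ⊆ ⊢⊣* ∘ → ∘ ⊢⊣*; write ◀ for the inverse of ▶. Then → is ▶-Church-Rosser modulo ⊢⊣* if and only if both (i) ← ∘ ▶ ⊆ ▶* ∘ ⊢⊣* ∘ ◀*, and (ii) ⊢⊣ ∘ ▶ ⊆ ▶+ ∘ ⊢⊣* ∘ ◀*. -/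
/-!
Write `~` for `⊢⊣*` and `R` for `~ ∘ → ∘ ~`; then `▶ ⊆ R` and `R` is well-founded. Call `y`
peak-joinable if any two elements `~ ∘ ▶* ∘ ~`-reachable from `y` are joinable, i.e. related by
`▶* ∘ ~ ∘ ◀*`. Joinability is transitive through peak-joinable elements, so it suffices that
every element is peak-joinable, which follows by well-founded induction along `R⁺`: condition
(ii) moves `~` behind a `▶⁺`-step, and what remains is a single `← ∘ ▶` peak, i.e. condition (i).
-/

open Relation

namespace ChurchRosserModulo

variable {A : Type*} {hd ar bt : A → A → Prop} {a b c d s t u w y : A}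

def JoinableMod (hd bt : A → A → Prop) (a c : A) : Prop :=
  ∃ u v, ReflTransGen bt a u ∧ ReflTransGen hd u v ∧ ReflTransGen bt c v

def ReachMod (hd bt : A → A → Prop) (y u : A) : Prop :=
  ∃ a b, ReflTransGen hd y a ∧ ReflTransGen bt a b ∧ ReflTransGen hd b u

def PeakJoinable (hd bt : A → A → Prop) (y : A) : Prop :=
  ∀ u w, ReachMod hd bt y u → ReachMod hd bt y w → JoinableMod hd bt u w

def StepMod (hd ar : A → A → Prop) (a b : A) : Prop :=
  ∃ x y, ReflTransGen hd a x ∧ ar x y ∧ ReflTransGen hd y b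

namespace JoinableMod

theorem of_reflTransGen_hd (h : ReflTransGen hd a c) : JoinableMod hd bt a c :=
  ⟨a, c, .refl, h, .refl⟩

theorem of_reflTransGen_left (h : ReflTransGen bt a c) : JoinableMod hd bt a c :=
  ⟨c, c, h, .refl, .refl⟩

theorem of_reflTransGen_right (h : ReflTransGen bt c a) : JoinableMod hd bt a c :=
  ⟨a, a, .refl, .refl, h⟩

theorem symm [Std.Symm hd] (h : JoinableMod hd bt a c) : JoinableMod hd bt c a :=
  let ⟨u, v, hau, huv, hcv⟩ := h
  ⟨v, u, hcv, _root_.symm huv, hau⟩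

theorem trans [Std.Symm hd] (hb : PeakJoinable hd bt b) (hab : JoinableMod hd bt a b)
    (hbc : JoinableMod hd bt b c) : JoinableMod hd bt a c := by
  obtain ⟨u, v, hau, huv, hbv⟩ := hab
  obtain ⟨u', v', hbu', hu'v', hcv'⟩ := hbc
  obtain ⟨p, q, hup, hpq, hv'q⟩ :=
    hb u v' ⟨b, v, .refl, hbv, _root_.symm huv⟩ ⟨b, u', .refl, hbu', hu'v'⟩
  exact ⟨p, q, hau.trans hup, hpq, hcv'.trans hv'q⟩

end JoinableMod

namespace StepMod

theorem head (h : ReflTransGen hd a b) (hbc : StepMod hd ar b c) : StepMod hd ar a c :=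
  let ⟨x, y, hbx, hxy, hyc⟩ := hbc
  ⟨x, y, h.trans hbx, hxy, hyc⟩

theorem tail (hab : StepMod hd ar a b) (h : ReflTransGen hd b c) : StepMod hd ar a c :=
  let ⟨x, y, hax, hxy, hyb⟩ := hab
  ⟨x, y, hax, hxy, hyb.trans h⟩

theorem transGen_of_reflTransGen_of_transGen (hbt : ∀ a b, bt a b → StepMod hd ar a b)
    (hys : ReflTransGen hd y s) (hst : TransGen bt s t) : TransGen (StepMod hd ar) y t := by
  obtain ⟨m, hsm, hmt⟩ := TransGen.head'_iff.mp (hst.lift id hbt)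
  exact .head' (head hys hsm) hmt

theorem transGen_tail (hab : TransGen (StepMod hd ar) a b) (h : ReflTransGen hd b c) :
    TransGen (StepMod hd ar) a c := by
  obtain ⟨m, ham, hmb⟩ := TransGen.tail'_iff.mp hab
  exact .tail' ham (tail hmb h)

theorem wellFounded_flip_transGen
    (hwf : ¬ ∃ f : ℕ → A, ∀ n, Comp ar (ReflTransGen hd) (f n) (f (n + 1))) :
    WellFounded (flip (TransGen (StepMod hd ar))) := by
  have hstep : WellFounded (flip (StepMod hd ar)) := by
    refine wellFounded_iff_isEmpty_descending_chain.mpr ⟨fun ⟨f, hf⟩ => hwf ?_⟩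
    choose x y hx hxy hy using hf
    exact ⟨x, fun n => ⟨y n, hxy n, (hy n).trans (hx (n + 1))⟩⟩
  exact hstep.transGen.mono fun _ _ h => transGen_swap.mp h

theorem reflTransGen_conv (h : StepMod hd ar a b) :
    ReflTransGen (fun x y => ar x y ∨ ar y x ∨ hd x y) a b :=
  let ⟨_, _, hax, hxy, hyb⟩ := h
  (ReflTransGen.mono (fun _ _ h => .inr (.inr h)) _ _ hax).trans
    (.head (.inl hxy) (ReflTransGen.mono (fun _ _ h => .inr (.inr h)) _ _ hyb))

end StepMod

section Peaks

variable [Std.Symm hd]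

theorem JoinableMod.trans_of_below (hbt : ∀ a b, bt a b → StepMod hd ar a b)
    (hlt : ∀ z, TransGen (StepMod hd ar) y z → PeakJoinable hd bt z)
    (hys : ReflTransGen hd y s) (hst : TransGen bt s t)
    (hat : JoinableMod hd bt a t) (htc : JoinableMod hd bt t c) : JoinableMod hd bt a c :=
  hat.trans (hlt t (StepMod.transGen_of_reflTransGen_of_transGen hbt hys hst)) htc

theorem exists_transGen_joinableMod_of_reflTransGen (hbt : ∀ a b, bt a b → StepMod hd ar a b)
    (cond2 : ∀ a b c, hd a b → bt b c →
      ∃ u v, TransGen bt a u ∧ ReflTransGen hd u v ∧ ReflTransGen bt c v)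
    (hlt : ∀ z, TransGen (StepMod hd ar) y z → PeakJoinable hd bt z)
    (hys : ReflTransGen hd y s) (hst : TransGen bt s t) {r : A} (hsr : ReflTransGen hd s r) :
    ∃ p, TransGen bt r p ∧ JoinableMod hd bt p t := by
  induction hsr with
  | refl => exact ⟨t, hst, .of_reflTransGen_hd .refl⟩
  | @tail r' r hsr' hr'r ih =>
    obtain ⟨p, hr'p, hpt⟩ := ih
    obtain ⟨m, hr'm, hmp⟩ := TransGen.head'_iff.mp hr'p
    obtain ⟨e, f, hre, hef, hmf⟩ := cond2 r r' m (symm hr'r) hr'm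
    have hyr' := hys.trans hsr'
    have hem : JoinableMod hd bt e m := ⟨e, f, .refl, hef, hmf⟩
    have hep := hem.trans_of_below hbt hlt hyr' (.single hr'm) (.of_reflTransGen_left hmp)
    exact ⟨e, hre, hep.trans_of_below hbt hlt hyr' hr'p hpt⟩

theorem joinableMod_of_transGen_left (hbt : ∀ a b, bt a b → StepMod hd ar a b)
    (cond2 : ∀ a b c, hd a b → bt b c →
      ∃ u v, TransGen bt a u ∧ ReflTransGen hd u v ∧ ReflTransGen bt c v)
    (hlt : ∀ z, TransGen (StepMod hd ar) y z → PeakJoinable hd bt z)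
    (hya : ReflTransGen hd y a) (hab : TransGen bt a b) (hbu : ReflTransGen hd b u)
    (hyw : ReflTransGen hd y w) : JoinableMod hd bt u w := by
  obtain ⟨p, hwp, hpb⟩ :=
    exists_transGen_joinableMod_of_reflTransGen hbt cond2 hlt hya hab ((symm hya).trans hyw)
  have hup := (JoinableMod.of_reflTransGen_hd (symm hbu)).trans_of_below hbt hlt hya hab hpb.symm
  exact hup.trans_of_below hbt hlt hyw hwp (.of_reflTransGen_right hwp.to_reflTransGen)

/-- The peak `b ◀⁺ ~ ▶⁺ d` is reduced to the local peak `x₁ ← x ▶ m` of condition (i). -/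
theorem joinableMod_of_transGen_of_transGen (hbt : ∀ a b, bt a b → StepMod hd ar a b)
    (cond1 : ∀ a b c, ar b a → bt b c → JoinableMod hd bt a c)
    (cond2 : ∀ a b c, hd a b → bt b c →
      ∃ u v, TransGen bt a u ∧ ReflTransGen hd u v ∧ ReflTransGen bt c v)
    (hlt : ∀ z, TransGen (StepMod hd ar) y z → PeakJoinable hd bt z)
    (hya : ReflTransGen hd y a) (hab : TransGen bt a b) (hbu : ReflTransGen hd b u)
    (hyc : ReflTransGen hd y c) (hcd : TransGen bt c d) (hdw : ReflTransGen hd d w) :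
    JoinableMod hd bt u w := by
  obtain ⟨a₁, haa₁, ha₁b⟩ := TransGen.head'_iff.mp hab
  obtain ⟨x, x₁, hax, hxx₁, hx₁a₁⟩ := hbt a a₁ haa₁
  have hyx := hya.trans hax
  obtain ⟨p, hxp, hpd⟩ :=
    exists_transGen_joinableMod_of_reflTransGen hbt cond2 hlt hyc hcd ((symm hyc).trans hyx)
  obtain ⟨m, hxm, hmp⟩ := TransGen.head'_iff.mp hxp
  have hbx₁ : JoinableMod hd bt b x₁ :=
    hlt a₁ (StepMod.transGen_of_reflTransGen_of_transGen hbt hya (.single haa₁)) b x₁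
      ⟨a₁, b, .refl, ha₁b, .refl⟩ ⟨a₁, a₁, .refl, .refl, symm hx₁a₁⟩
  have hux₁ := (JoinableMod.of_reflTransGen_hd (symm hbu)).trans_of_below hbt hlt hya hab hbx₁
  have hum := hux₁.trans (hlt x₁ (.single ⟨x, x₁, hyx, hxx₁, .refl⟩)) (cond1 x₁ x m hxx₁ hxm)
  have hup := hum.trans_of_below hbt hlt hyx (.single hxm) (.of_reflTransGen_left hmp)
  have hud := hup.trans_of_below hbt hlt hyx hxp hpd
  exact hud.trans_of_below hbt hlt hyc hcd (.of_reflTransGen_hd hdw)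

theorem peakJoinable_of_forall_transGen (hbt : ∀ a b, bt a b → StepMod hd ar a b)
    (cond1 : ∀ a b c, ar b a → bt b c → JoinableMod hd bt a c)
    (cond2 : ∀ a b c, hd a b → bt b c →
      ∃ u v, TransGen bt a u ∧ ReflTransGen hd u v ∧ ReflTransGen bt c v)
    (hlt : ∀ z, TransGen (StepMod hd ar) y z → PeakJoinable hd bt z) : PeakJoinable hd bt y := by
  rintro u w ⟨a, b, hya, hab, hbu⟩ ⟨c, d, hyc, hcd, hdw⟩
  rcases hab.cases_head with rfl | ⟨a₁, haa₁, ha₁b⟩ <;>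
    rcases hcd.cases_head with rfl | ⟨c₁, hcc₁, hc₁d⟩
  · exact .of_reflTransGen_hd ((symm hbu).trans ((symm hya).trans (hyc.trans hdw)))
  · exact (joinableMod_of_transGen_left hbt cond2 hlt hyc (.head' hcc₁ hc₁d) hdw
      (hya.trans hbu)).symm
  · exact joinableMod_of_transGen_left hbt cond2 hlt hya (.head' haa₁ ha₁b) hbu (hyc.trans hdw)
  · exact joinableMod_of_transGen_of_transGen hbt cond1 cond2 hlt hya (.head' haa₁ ha₁b) hbu
      hyc (.head' hcc₁ hc₁d) hdw

theorem peakJoinable_of_wellFounded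
    (hwf : ¬ ∃ f : ℕ → A, ∀ n, Comp ar (ReflTransGen hd) (f n) (f (n + 1)))
    (hbt : ∀ a b, bt a b → StepMod hd ar a b)
    (cond1 : ∀ a b c, ar b a → bt b c → JoinableMod hd bt a c)
    (cond2 : ∀ a b c, hd a b → bt b c →
      ∃ u v, TransGen bt a u ∧ ReflTransGen hd u v ∧ ReflTransGen bt c v)
    (y : A) : PeakJoinable hd bt y :=
  (StepMod.wellFounded_flip_transGen hwf).induction y fun _ hlt =>
    peakJoinable_of_forall_transGen hbt cond1 cond2 hlt

theorem joinableMod_of_reflTransGen (har : ∀ a b, ar a b → bt a b)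
    (hj : ∀ y, PeakJoinable hd bt y) (h : ReflTransGen (fun x y => ar x y ∨ ar y x ∨ hd x y) a b) :
    JoinableMod hd bt a b := by
  induction h with
  | refl => exact .of_reflTransGen_hd .refl
  | tail _ hbc hab =>
    refine hab.trans (hj _) ?_
    rcases hbc with h | h | h
    · exact .of_reflTransGen_left (.single (har _ _ h))
    · exact .of_reflTransGen_right (.single (har _ _ h))
    · exact .of_reflTransGen_hd (.single h)

/-- An empty `▶*`-leg would give `b ▶⁺ v ~ b`, an `R`-cycle. -/
theorem exists_transGen_of_joinableMod
    (hwf : ¬ ∃ f : ℕ → A, ∀ n, Comp ar (ReflTransGen hd) (f n) (f (n + 1)))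
    (hbt : ∀ a b, bt a b → StepMod hd ar a b) (hab : hd a b) (hbc : bt b c)
    (h : JoinableMod hd bt a c) :
    ∃ u v, TransGen bt a u ∧ ReflTransGen hd u v ∧ ReflTransGen bt c v := by
  obtain ⟨u, v, hau, huv, hcv⟩ := h
  rcases hau.cases_head with rfl | ⟨a', haa', ha'u⟩
  · have hbb : TransGen (StepMod hd ar) b b :=
      StepMod.transGen_tail (StepMod.transGen_of_reflTransGen_of_transGen hbt .refl
        (.head' hbc hcv)) ((symm huv).tail hab)
    exact absurd hbb ((StepMod.wellFounded_flip_transGen hwf).irrefl.irrefl b)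
  · exact ⟨u, v, .head' haa' ha'u, huv, hcv⟩

end Peaks

end ChurchRosserModulo

open ChurchRosserModulo in
/-- Corollary 2.12 (Theorem 5 of Jouannaud–Kirchner 1986):
`→` is `▶`-Church-Rosser modulo `⊢⊣*` iff conditions (i) and (ii) hold.
Here `⋈ = ↔ ∪ ⊢⊣` is built from `→` (not from `▶`). -/
theorem bt_church_rosser_modulo_iff {A : Type*} (hd ar bt : A → A → Prop)
    (hsym : ∀ a b, hd a b → hd b a)
    (hwf : ¬ ∃ f : ℕ → A, ∀ n,
      Relation.Comp ar (Relation.ReflTransGen hd) (f n) (f (n + 1)))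
    (hsub1 : ∀ a b, ar a b → bt a b)
    (hsub2 : ∀ a b, bt a b → ∃ x y,
      Relation.ReflTransGen hd a x ∧ ar x y ∧ Relation.ReflTransGen hd y b) :
    (∀ a b, Relation.ReflTransGen (fun x y => ar x y ∨ ar y x ∨ hd x y) a b →
      ∃ u v, Relation.ReflTransGen bt a u ∧ Relation.ReflTransGen hd u v ∧
        Relation.ReflTransGen bt b v)
    ↔
    ((∀ a b c, ar b a → bt b c →
      ∃ u v, Relation.ReflTransGen bt a u ∧ Relation.ReflTransGen hd u v ∧
        Relation.ReflTransGen bt c v) ∧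
     (∀ a b c, hd a b → bt b c →
      ∃ u v, Relation.TransGen bt a u ∧ Relation.ReflTransGen hd u v ∧
        Relation.ReflTransGen bt c v)) := by
  have : Std.Symm hd := ⟨hsym⟩
  have hconv (a b : A) (h : bt a b) := StepMod.reflTransGen_conv (hsub2 a b h)
  constructor
  · intro hcr
    refine ⟨fun a b c hba hbc => hcr a c (.head (.inr (.inl hba)) (hconv b c hbc)),
      fun a b c hab hbc => ?_⟩
    exact exists_transGen_of_joinableMod hwf hsub2 hab hbc
      (hcr a c (.head (.inr (.inr hab)) (hconv b c hbc)))
  · rintro ⟨cond1, cond2⟩ a b hab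
    exact joinableMod_of_reflTransGen hsub1
      (peakJoinable_of_wellFounded hwf hsub2 cond1 cond2) hab
end

section
/- Let ⊢⊣, → be relations on a set A such that ⊢⊣ is symmetric and → is well-founded. Then → is Church-Rosser modulo ⊢⊣* if and only if both (i') ← ∘ → ⊆ →* ∘ ⊢⊣* ∘ ←*, and (ii') ⊢⊣* ∘ → ⊆ →* ∘ ⊢⊣* ∘ ←*. -/
/-!
Since `→` is terminating, every element has a normal form, and it suffices to show that
normal forms are unique up to `⊢⊣*`. By well-founded induction on `c` along `→⁺` one proves
simultaneously that every reduct of `c`, and every element `⊢⊣*`-equivalent to `c`, reduces to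
a normal form `⊢⊣*`-equivalent to any given normal form of `c`: the local peak (i') and the
local cliff (ii') at `c` are closed by these two statements at the strictly smaller elements
produced by (i') and (ii'). Following a conversion `a ⋈* b` step by step then yields a normal
form of `b` equivalent to one of `a`.
-/

open Relation

namespace ModuloRewriting

variable {A : Type*} {ar hd : A → A → Prop}

def IsNormalForm (ar : A → A → Prop) (a : A) : Prop := ∀ b, ¬ ar a b

/-- The relation `→* ∘ ⊢⊣* ∘ ←*`. -/
def JoinableModulo (ar hd : A → A → Prop) (a b : A) : Prop :=
  ∃ u v, ReflTransGen ar a u ∧ ReflTransGen hd u v ∧ ReflTransGen ar b v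

def ReachesNormalFormEquiv (ar hd : A → A → Prop) (d n : A) : Prop :=
  ∃ w, IsNormalForm ar w ∧ ReflTransGen ar d w ∧ ReflTransGen hd w n

def ConfluentToNormalFormsAt (ar hd : A → A → Prop) (c : A) : Prop :=
  ∀ n d, IsNormalForm ar n → ReflTransGen ar c n → ReflTransGen ar c d →
    ReachesNormalFormEquiv ar hd d n

def CoherentToNormalFormsAt (ar hd : A → A → Prop) (c : A) : Prop :=
  ∀ q n, IsNormalForm ar n → ReflTransGen hd q c → ReflTransGen ar c n →
    ReachesNormalFormEquiv ar hd q n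

theorem wellFounded_flip_of_not_exists_chain
    (hwf : ¬ ∃ f : ℕ → A, ∀ n, ar (f n) (f (n + 1))) : WellFounded (flip ar) :=
  wellFounded_iff_isEmpty_descending_chain.mpr ⟨fun ⟨f, hf⟩ => hwf ⟨f, hf⟩⟩

theorem IsNormalForm.eq_of_reflTransGen {n d : A} (hn : IsNormalForm ar n)
    (h : ReflTransGen ar n d) : d = n := by
  induction h with
  | refl => rfl
  | tail _ hs ih => exact absurd (ih ▸ hs) (hn _)

theorem transGen_flip_of_rel_of_reflTransGen {a b c : A} (hab : ar a b)
    (hbc : ReflTransGen ar b c) : TransGen (flip ar) c a :=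
  transGen_swap.mpr (TransGen.head' hab hbc)

theorem exists_normalForm (wf : WellFounded (flip ar)) (a : A) :
    ∃ n, ReflTransGen ar a n ∧ IsNormalForm ar n := by
  induction a using wf.induction with
  | _ a ih =>
    by_cases h : ∃ b, ar a b
    · obtain ⟨b, hab⟩ := h
      obtain ⟨n, hbn, hn⟩ := ih b hab
      exact ⟨n, .head hab hbn, hn⟩
    · exact ⟨a, .refl, fun b hab => h ⟨b, hab⟩⟩

theorem ReachesNormalFormEquiv.head {d d' n : A} (hdd' : ReflTransGen ar d d')
    (h : ReachesNormalFormEquiv ar hd d' n) : ReachesNormalFormEquiv ar hd d n :=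
  let ⟨w, hw, hd'w, hwn⟩ := h
  ⟨w, hw, hdd'.trans hd'w, hwn⟩

theorem ReachesNormalFormEquiv.trans_equiv {d n m : A} (h : ReachesNormalFormEquiv ar hd d n)
    (hnm : ReflTransGen hd n m) : ReachesNormalFormEquiv ar hd d m :=
  let ⟨w, hw, hdw, hwn⟩ := h
  ⟨w, hw, hdw, hwn.trans hnm⟩

variable [Std.Symm hd]

theorem reachesNormalFormEquiv_of_equiv_normalForm (wf : WellFounded (flip ar))
    (hcliff : ∀ a b c, ReflTransGen hd a b → ar b c → JoinableModulo ar hd a c)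
    {n : A} (hn : IsNormalForm ar n) (q : A) (hqn : ReflTransGen hd q n) :
    ReachesNormalFormEquiv ar hd q n := by
  induction q using wf.transGen.induction with
  | _ q ih =>
    by_cases hq : ∃ q₁, ar q q₁
    · obtain ⟨q₁, hqq₁⟩ := hq
      obtain ⟨u, v, hnu, huv, hq₁v⟩ := hcliff n q q₁ (symm hqn) hqq₁
      obtain rfl : u = n := hn.eq_of_reflTransGen hnu
      exact (ih v (transGen_flip_of_rel_of_reflTransGen hqq₁ hq₁v) (symm huv)).head
        (.head hqq₁ hq₁v)
    · exact ⟨q, fun b hqb => hq ⟨b, hqb⟩, .refl, hqn⟩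

section Step

variable {c : A}
  (ih : ∀ c', TransGen (flip ar) c' c →
    ConfluentToNormalFormsAt ar hd c' ∧ CoherentToNormalFormsAt ar hd c')
include ih

theorem confluentToNormalFormsAt_of_forall_transGen
    (hpeak : ∀ a b c, ar b a → ar b c → JoinableModulo ar hd a c) :
    ConfluentToNormalFormsAt ar hd c := by
  intro n d hn hcn hcd
  rcases hcn.cases_head with rfl | ⟨a₁, hca₁, ha₁n⟩
  · obtain rfl := hn.eq_of_reflTransGen hcd
    exact ⟨d, hn, .refl, .refl⟩
  rcases hcd.cases_head with rfl | ⟨d₁, hcd₁, hd₁d⟩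
  · exact ⟨n, hn, .head hca₁ ha₁n, .refl⟩
  obtain ⟨p, r, ha₁p, hpr, hd₁r⟩ := hpeak a₁ c d₁ hca₁ hcd₁
  obtain ⟨w₁, hw₁, hpw₁, hw₁n⟩ := (ih a₁ (.single hca₁)).1 n p hn ha₁n ha₁p
  obtain ⟨w₂, hw₂, hrw₂, hw₂w₁⟩ :=
    (ih p (transGen_flip_of_rel_of_reflTransGen hca₁ ha₁p)).2 r w₁ hw₁ (symm hpr) hpw₁
  exact ((ih d₁ (.single hcd₁)).1 w₂ d hw₂ (hd₁r.trans hrw₂) hd₁d).trans_equiv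
    (hw₂w₁.trans hw₁n)

theorem coherentToNormalFormsAt_of_forall_transGen (wf : WellFounded (flip ar))
    (hcliff : ∀ a b c, ReflTransGen hd a b → ar b c → JoinableModulo ar hd a c) :
    CoherentToNormalFormsAt ar hd c := by
  intro q n hn hqc hcn
  rcases hcn.cases_head with rfl | ⟨c₁, hcc₁, hc₁n⟩
  · exact reachesNormalFormEquiv_of_equiv_normalForm wf hcliff hn q hqc
  obtain ⟨s, t, hqs, hst, hc₁t⟩ := hcliff q c c₁ hqc hcc₁
  obtain ⟨w₁, hw₁, htw₁, hw₁n⟩ := (ih c₁ (.single hcc₁)).1 n t hn hc₁n hc₁t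
  exact (((ih t (transGen_flip_of_rel_of_reflTransGen hcc₁ hc₁t)).2 s w₁ hw₁ hst htw₁).head
    hqs).trans_equiv hw₁n

end Step

theorem confluentToNormalFormsAt_and_coherentToNormalFormsAt (wf : WellFounded (flip ar))
    (hpeak : ∀ a b c, ar b a → ar b c → JoinableModulo ar hd a c)
    (hcliff : ∀ a b c, ReflTransGen hd a b → ar b c → JoinableModulo ar hd a c) (c : A) :
    ConfluentToNormalFormsAt ar hd c ∧ CoherentToNormalFormsAt ar hd c := by
  induction c using wf.transGen.induction with
  | _ c ih =>
    exact ⟨confluentToNormalFormsAt_of_forall_transGen ih hpeak,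
      coherentToNormalFormsAt_of_forall_transGen ih wf hcliff⟩

theorem joinableModulo_of_conversion (wf : WellFounded (flip ar))
    (hpeak : ∀ a b c, ar b a → ar b c → JoinableModulo ar hd a c)
    (hcliff : ∀ a b c, ReflTransGen hd a b → ar b c → JoinableModulo ar hd a c) {a b : A}
    (hab : ReflTransGen (fun x y => ar x y ∨ ar y x ∨ hd x y) a b) : JoinableModulo ar hd a b := by
  have hlocal := confluentToNormalFormsAt_and_coherentToNormalFormsAt wf hpeak hcliff
  obtain ⟨n, han, hn⟩ := exists_normalForm wf a
  suffices ReachesNormalFormEquiv ar hd b n by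
    obtain ⟨w, -, hbw, hwn⟩ := this
    exact ⟨n, w, han, symm hwn, hbw⟩
  induction hab with
  | refl => exact ⟨n, hn, han, .refl⟩
  | tail _ hbb' ih =>
    obtain ⟨w, hw, hbw, hwn⟩ := ih
    rcases hbb' with hbb' | hb'b | hbb'
    · exact ((hlocal _).1 w _ hw hbw (.single hbb')).trans_equiv hwn
    · exact ⟨w, hw, .head hb'b hbw, hwn⟩
    · exact ((hlocal _).2 _ w hw (.single (symm hbb')) hbw).trans_equiv hwn

end ModuloRewriting

open ModuloRewriting in
/-- Proposition 2.15 (corollary of Lemmas 2.6 and 2.7 of Huet 1980). -/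
theorem crm_iff_huet_nonlocal {A : Type*} (hd ar : A → A → Prop)
    (hsym : ∀ a b, hd a b → hd b a)
    (hwf : ¬ ∃ f : ℕ → A, ∀ n, ar (f n) (f (n + 1))) :
    (∀ a b, Relation.ReflTransGen (fun x y => ar x y ∨ ar y x ∨ hd x y) a b →
      ∃ u v, Relation.ReflTransGen ar a u ∧ Relation.ReflTransGen hd u v ∧
        Relation.ReflTransGen ar b v)
    ↔
    ((∀ a b c, ar b a → ar b c →
      ∃ u v, Relation.ReflTransGen ar a u ∧ Relation.ReflTransGen hd u v ∧
        Relation.ReflTransGen ar c v) ∧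
     (∀ a b c, Relation.ReflTransGen hd a b → ar b c →
      ∃ u v, Relation.ReflTransGen ar a u ∧ Relation.ReflTransGen hd u v ∧
        Relation.ReflTransGen ar c v)) := by
  have : Std.Symm hd := ⟨hsym⟩
  refine ⟨fun hcr => ⟨fun a b c hba hbc => ?_, fun a b c hab hbc => ?_⟩,
    fun ⟨hpeak, hcliff⟩ a b hab =>
      joinableModulo_of_conversion (wellFounded_flip_of_not_exists_chain hwf) hpeak hcliff hab⟩
  · exact hcr a c (.head (.inr (.inl hba)) (.single (.inl hbc)))
  · exact hcr a c ((ReflTransGen.mono (fun _ _ h => Or.inr (Or.inr h)) a b hab).tail (.inl hbc))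
end

section
/- Let I be a set of indexes equipped with a well-founded strict order ≻, let →_α be a relation on a set A for each α ∈ I, and let ⊢⊣ be a symmetric relation on A. For J ⊆ I write →_J for the union ⋃_{α∈J} →_α, and for a single index α write ⋎α = {β ∈ I | β ≺ α}. Suppose that for all α, β ∈ I: (i) ←_α ∘ →_β ⊆ (→_{⋎α})* ∘ (→_β)= ∘ (→_{⋎α ∪ ⋎β})* ∘ ⊢⊣* ∘ (←_{⋎α ∪ ⋎β})* ∘ (←_α)= ∘ (←_{⋎β})*, and (ii) ⊢⊣ ∘ →_β ⊆ (→_β)= ∘ (→_{⋎β})* ∘ ⊢⊣* ∘ (←_{⋎β})*. Then →_I is Church-Rosser modulo ⊢⊣*. -/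
/-!
Fix a rank `r : I → Ordinal` that strictly decreases along `≻`, and read a conversion, written as
the list `s₁ ⋯ sₙ` of its labelled steps, as the ordinal function `s₁ ∘ ⋯ ∘ sₙ`, where
`→_α` is `x ↦ x + ω ^ ω ^ r α`, `←_α` is `x ↦ ω ^ ω ^ r α * (x + 1)` and `⊢⊣` is `x ↦ x + 1`.
These functions are monotone and inflationary. Steps whose labels are below a level `c` (that is,
`ω ^ r γ + c = c`) map every segment `[0, ω ^ c * (p + 1))` into itself, as `ω ^ c` is additively
principal and `ω ^ ω ^ r γ * ω ^ c = ω ^ c`. With this, conditions (i) and (ii) replace every peak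
`←_α →_β` and every cliff `⊢⊣ →_β`, `←_α ⊢⊣` by a conversion with a pointwise smaller function, so
a well-founded induction on the value at `0` sorts every conversion into the shape `→* ⊢⊣* ←*`.
-/

open Ordinal Relation

namespace DecreasingDiagrams

section OrdinalArithmetic

variable {a c e p v : Ordinal}

theorem add_lt_opow_mul_add_one (hv : v < ω ^ c * (p + 1)) (he : e < ω ^ c) :
    v + e < ω ^ c * (p + 1) := by
  rw [mul_add_one] at hv ⊢
  obtain ⟨d, hd, hvd⟩ := (lt_add_iff (opow_pos c omega0_pos).ne').1 hv
  calc v + e ≤ ω ^ c * p + d + e := add_le_add_left hvd e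
    _ = ω ^ c * p + (d + e) := add_assoc _ _ _
    _ < ω ^ c * p + ω ^ c := add_lt_add_right (isPrincipal_add_omega0_opow c hd he) _

theorem add_le_opow_mul_add_one (hv : v < ω ^ c * (p + 1)) (he : e ≤ ω ^ c) :
    v + e ≤ ω ^ c * (p + 1) := by
  rw [mul_add_one] at hv ⊢
  obtain ⟨d, hd, hvd⟩ := (lt_add_iff (opow_pos c omega0_pos).ne').1 hv
  calc v + e ≤ ω ^ c * p + d + ω ^ c := add_le_add hvd he
    _ = ω ^ c * p + ω ^ c := by rw [add_assoc, add_omega0_opow hd]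

theorem add_opow_eq_opow_mul_div_add_one (x c : Ordinal) :
    x + ω ^ c = ω ^ c * (x / ω ^ c + 1) := by
  conv_lhs => rw [← div_add_mod x (ω ^ c)]
  rw [add_assoc, add_omega0_opow (mod_lt x (opow_pos c omega0_pos).ne'), mul_add_one]

theorem opow_add_add_opow_of_lt_or_lt {x y : Ordinal} (h : a < x ∨ a < y) :
    ω ^ a + (ω ^ x + ω ^ y) = ω ^ x + ω ^ y := by
  have hlt {z} (hz : a < z) : ω ^ a < ω ^ z := (opow_lt_opow_iff_right one_lt_omega0).2 hz
  rcases h with h | h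
  · rw [← add_assoc, add_omega0_opow (hlt h)]
  · rcases lt_or_ge a x with h' | h'
    · rw [← add_assoc, add_omega0_opow (hlt h')]
    · rw [add_omega0_opow ((opow_le_opow_right omega0_pos h').trans_lt (hlt h)),
        add_omega0_opow (hlt h)]

end OrdinalArithmetic

section Walk

variable {S A : Type*} {R : S → A → A → Prop}

variable (R) in
def Walk : List S → A → A → Prop
  | [], a, b => a = b
  | s :: l, a, c => ∃ b, R s a b ∧ Walk l b c

theorem walk_append {l₁ l₂ : List S} {a c : A} :
    Walk R (l₁ ++ l₂) a c ↔ ∃ b, Walk R l₁ a b ∧ Walk R l₂ b c := by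
  induction l₁ generalizing a with
  | nil => simp [Walk]
  | cons s l₁ ih =>
    simp only [List.cons_append, Walk, ih]
    exact ⟨fun ⟨b, hs, c', h₁, h₂⟩ => ⟨c', ⟨b, hs, h₁⟩, h₂⟩,
      fun ⟨c', ⟨b, hs, h₁⟩, h₂⟩ => ⟨b, hs, c', h₁, h₂⟩⟩

theorem Walk.append {l₁ l₂ : List S} {a b c : A} (h₁ : Walk R l₁ a b) (h₂ : Walk R l₂ b c) :
    Walk R (l₁ ++ l₂) a c :=
  walk_append.2 ⟨b, h₁, h₂⟩

theorem exists_walk_of_reflTransGen {r : A → A → Prop} {P : S → Prop}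
    (hr : ∀ x y, r x y → ∃ s, P s ∧ R s x y) {a b : A} (h : ReflTransGen r a b) :
    ∃ l, (∀ s ∈ l, P s) ∧ Walk R l a b := by
  induction h using ReflTransGen.head_induction_on with
  | refl => exact ⟨[], by simp, rfl⟩
  | head hxy _ ih =>
    obtain ⟨l, hl, hw⟩ := ih
    obtain ⟨s, hs, hR⟩ := hr _ _ hxy
    exact ⟨s :: l, List.forall_mem_cons.2 ⟨hs, hl⟩, _, hR, hw⟩

theorem exists_walk_of_eq_or {s : S} {a b : A} (h : b = a ∨ R s a b) :
    ∃ l, (l = [] ∨ l = [s]) ∧ Walk R l a b := by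
  rcases h with rfl | h
  · exact ⟨[], .inl rfl, rfl⟩
  · exact ⟨[s], .inr rfl, b, h, rfl⟩

theorem reflTransGen_of_walk {r : A → A → Prop} {l : List S}
    (hr : ∀ s ∈ l, ∀ x y, R s x y → r x y) {a b : A} (h : Walk R l a b) :
    ReflTransGen r a b := by
  induction l generalizing a with
  | nil => exact h ▸ .refl
  | cons s l ih =>
    obtain ⟨c, hs, hl⟩ := h
    rw [List.forall_mem_cons] at hr
    exact .head (hr.1 _ _ hs) (ih hr.2 hl)

end Walk

inductive Step (I : Type*)
  | fwd (α : I)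
  | bwd (α : I)
  | eps

namespace Step

variable {A I : Type*}

def rel (ar : I → A → A → Prop) (hd : A → A → Prop) : Step I → A → A → Prop
  | fwd α, a, b => ar α a b
  | bwd α, a, b => ar α b a
  | eps, a, b => hd a b

variable (r : I → Ordinal)

noncomputable def weight : Step I → Ordinal
  | fwd α | bwd α => ω ^ r α
  | eps => 0

noncomputable def interp : Step I → Ordinal → Ordinal
  | fwd α, x => x + ω ^ ω ^ r α
  | bwd α, x => ω ^ ω ^ r α * (x + 1)
  | eps, x => x + 1

def IsBelow (c : Ordinal) (s : Step I) : Prop :=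
  s.weight r + c = c

theorem interp_mono (s : Step I) : Monotone (s.interp r) := by
  intro x y h
  cases s <;> simp only [interp] <;> gcongr

theorem lt_interp (s : Step I) (x : Ordinal) : x < s.interp r x := by
  cases s with
  | fwd α => exact lt_add_of_pos_right x (opow_pos _ omega0_pos)
  | bwd α => exact (lt_add_one x).trans_le (le_mul_right _ (opow_pos _ omega0_pos))
  | eps => exact lt_add_one x

theorem interp_lt_opow_mul (s : Step I) {c p v : Ordinal} (hc : 0 < c)
    (hv : v < ω ^ c * (p + 1)) : s.interp r v < ω ^ (s.weight r + c) * (p + 1) := by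
  have h₁ : v + 1 < ω ^ c * (p + 1) := add_lt_opow_mul_add_one hv <| by
    simpa using (opow_lt_opow_iff_right one_lt_omega0).2 hc
  cases s with
  | fwd α =>
    have hv' : v < ω ^ (ω ^ r α + c) * (p + 1) :=
      hv.trans_le (mul_le_mul_left (opow_le_opow_right omega0_pos le_add_self) _)
    exact add_lt_opow_mul_add_one hv'
      ((opow_lt_opow_iff_right one_lt_omega0).2 (lt_add_of_pos_right _ hc))
  | bwd α =>
    rw [opow_add, mul_assoc]
    exact mul_lt_mul_of_pos_left h₁ (opow_pos _ omega0_pos)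
  | eps => simpa [weight, interp] using h₁

end Step

open Step

section Interpretation

variable {I : Type*} (r : I → Ordinal)

noncomputable def interpList (l : List (Step I)) (x : Ordinal) : Ordinal :=
  l.foldr (Step.interp r) x

@[simp] theorem interpList_nil (x : Ordinal) : interpList r [] x = x := rfl

@[simp] theorem interpList_cons (s : Step I) (l : List (Step I)) (x : Ordinal) :
    interpList r (s :: l) x = s.interp r (interpList r l x) := rfl

@[simp] theorem interpList_append (l₁ l₂ : List (Step I)) (x : Ordinal) :
    interpList r (l₁ ++ l₂) x = interpList r l₁ (interpList r l₂ x) :=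
  List.foldr_append

theorem interpList_lt_of_forall_isBelow {L : List (Step I)} {c p v : Ordinal} (hc : 0 < c)
    (hL : ∀ s ∈ L, s.IsBelow r c) (hv : v < ω ^ c * (p + 1)) :
    interpList r L v < ω ^ c * (p + 1) := by
  induction L with
  | nil => exact hv
  | cons s L ih =>
    rw [List.forall_mem_cons] at hL
    have h := s.interp_lt_opow_mul r hc (ih hL.2)
    rwa [show s.weight r + c = c from hL.1] at h

theorem interpList_le_of_optional_fwd {L : List (Step I)} {β : I} {c p v : Ordinal}
    (hL : L = [] ∨ L = [fwd β]) (hβ : ω ^ r β ≤ c) (hv : v < ω ^ c * (p + 1)) :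
    interpList r L v ≤ ω ^ c * (p + 1) := by
  rcases hL with rfl | rfl
  · exact hv.le
  · exact add_le_opow_mul_add_one hv (opow_le_opow_right omega0_pos hβ)

theorem interpList_peak_lt {α β : I} {L₁ Lb M La L₄ : List (Step I)}
    (h₁ : ∀ s ∈ L₁, s.IsBelow r (ω ^ r α)) (hb : Lb = [] ∨ Lb = [fwd β])
    (hM : ∀ s ∈ M, s.IsBelow r (ω ^ r α + ω ^ r β)) (ha : La = [] ∨ La = [bwd α])
    (h₄ : ∀ s ∈ L₄, s.IsBelow r (ω ^ r β)) (x : Ordinal) :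
    interpList r (L₁ ++ Lb ++ M ++ La ++ L₄) x < interpList r [bwd α, fwd β] x := by
  set A := ω ^ r α
  set B := ω ^ r β
  have hA : 0 < A := opow_pos _ omega0_pos
  have hB : 0 < B := opow_pos _ omega0_pos
  have hx : x + ω ^ B = ω ^ B * (x / ω ^ B + 1) := add_opow_eq_opow_mul_div_add_one x B
  have h₄' : interpList r L₄ x < ω ^ B * (x / ω ^ B + 1) :=
    interpList_lt_of_forall_isBelow r hB h₄ (hx ▸ lt_add_of_pos_right x (opow_pos B omega0_pos))
  have ha' : interpList r La (interpList r L₄ x) < ω ^ (A + B) * (x / ω ^ B + 1) := by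
    rcases ha with rfl | rfl
    · exact h₄'.trans_le (mul_le_mul_left (opow_le_opow_right omega0_pos le_add_self) _)
    · exact (bwd α).interp_lt_opow_mul r hB h₄'
  have hb' : interpList r Lb (interpList r M (interpList r La (interpList r L₄ x))) ≤
      ω ^ A * (x + ω ^ B) := by
    rw [hx, ← mul_assoc, ← opow_add]
    exact interpList_le_of_optional_fwd r hb le_add_self
      (interpList_lt_of_forall_isBelow r (hA.trans_le le_self_add) hM ha')
  simp only [interpList_append]
  exact interpList_lt_of_forall_isBelow r hA h₁
    (hb'.trans_lt (mul_lt_mul_of_pos_left (lt_add_one _) (opow_pos _ omega0_pos)))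

theorem interpList_eps_fwd_lt {β : I} {Lb M : List (Step I)} (hb : Lb = [] ∨ Lb = [fwd β])
    (hM : ∀ s ∈ M, s.IsBelow r (ω ^ r β)) (x : Ordinal) :
    interpList r (Lb ++ M) x < interpList r [eps, fwd β] x := by
  set B := ω ^ r β
  have hx : x + ω ^ B = ω ^ B * (x / ω ^ B + 1) := add_opow_eq_opow_mul_div_add_one x B
  have hM' : interpList r M x < ω ^ B * (x / ω ^ B + 1) :=
    interpList_lt_of_forall_isBelow r (opow_pos _ omega0_pos) hM
      (hx ▸ lt_add_of_pos_right x (opow_pos B omega0_pos))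
  have hb' := interpList_le_of_optional_fwd r hb le_rfl hM'
  rw [← hx] at hb'
  simpa [interp] using Order.lt_add_one_iff.2 hb'

theorem interpList_bwd_eps_lt {α : I} {M La : List (Step I)}
    (hM : ∀ s ∈ M, s.IsBelow r (ω ^ r α)) (ha : La = [] ∨ La = [bwd α]) (x : Ordinal) :
    interpList r (M ++ La) x < interpList r [bwd α, eps] x := by
  set A := ω ^ r α
  have ha' : interpList r La x < ω ^ A * (x + 1 + 1) := by
    rcases ha with rfl | rfl
    · exact ((lt_add_one x).trans (lt_add_one _)).trans_le (le_mul_right _ (opow_pos _ omega0_pos))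
    · exact mul_lt_mul_of_pos_left (lt_add_one _) (opow_pos _ omega0_pos)
  simpa [interp] using interpList_lt_of_forall_isBelow r (opow_pos _ omega0_pos) hM ha'

end Interpretation

section Sorting

variable {A I : Type*}

inductive Descent : Step I → Step I → Prop
  | bwd_fwd (α β : I) : Descent (bwd α) (fwd β)
  | eps_fwd (β : I) : Descent eps (fwd β)
  | bwd_eps (α : I) : Descent (bwd α) eps

def IsSorted (l : List (Step I)) : Prop :=
  ∃ F E B, l = F ++ E ++ B ∧ (∀ s ∈ F, ∃ α, s = fwd α) ∧ (∀ s ∈ E, s = eps) ∧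
    ∀ s ∈ B, ∃ α, s = bwd α

theorem isSorted_nil : IsSorted ([] : List (Step I)) :=
  ⟨[], [], [], rfl, by simp, by simp, by simp⟩

theorem IsSorted.cons_or_exists_descent {l : List (Step I)} (hl : IsSorted l) (s : Step I) :
    IsSorted (s :: l) ∨ ∃ t Q, l = t :: Q ∧ Descent s t := by
  obtain ⟨F, E, B, rfl, hF, hE, hB⟩ := hl
  cases s with
  | fwd α => exact .inl ⟨fwd α :: F, E, B, rfl, List.forall_mem_cons.2 ⟨⟨α, rfl⟩, hF⟩, hE, hB⟩
  | eps =>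
    rcases F with _ | ⟨t, F⟩
    · exact .inl ⟨[], eps :: E, B, rfl, by simp, List.forall_mem_cons.2 ⟨rfl, hE⟩, hB⟩
    · obtain ⟨β, rfl⟩ := hF t List.mem_cons_self
      exact .inr ⟨_, _, rfl, .eps_fwd β⟩
  | bwd α =>
    rcases F with _ | ⟨t, F⟩
    · rcases E with _ | ⟨t, E⟩
      · exact .inl ⟨[], [], bwd α :: B, rfl, by simp, by simp,
          List.forall_mem_cons.2 ⟨⟨α, rfl⟩, hB⟩⟩
      · obtain rfl := hE t List.mem_cons_self
        exact .inr ⟨_, _, rfl, .bwd_eps α⟩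
    · obtain ⟨β, rfl⟩ := hF t List.mem_cons_self
      exact .inr ⟨_, _, rfl, .bwd_fwd α β⟩

theorem IsSorted.exists_of_walk {ar : I → A → A → Prop} {hd : A → A → Prop}
    {l : List (Step I)} {a b : A} (hl : IsSorted l) (hw : Walk (Step.rel ar hd) l a b) :
    ∃ u v, ReflTransGen (fun x y => ∃ α, ar α x y) a u ∧ ReflTransGen hd u v ∧
      ReflTransGen (fun x y => ∃ α, ar α x y) b v := by
  obtain ⟨F, E, B, rfl, hF, hE, hB⟩ := hl
  obtain ⟨v, hFE, hB'⟩ := walk_append.1 hw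
  obtain ⟨u, hF', hE'⟩ := walk_append.1 hFE
  refine ⟨u, v, reflTransGen_of_walk ?_ hF', reflTransGen_of_walk ?_ hE',
    reflTransGen_swap.1 (reflTransGen_of_walk ?_ hB')⟩
  · rintro s hs x y h
    obtain ⟨α, rfl⟩ := hF s hs
    exact ⟨α, h⟩
  · rintro s hs x y h
    rwa [hE s hs] at h
  · rintro s hs x y h
    obtain ⟨α, rfl⟩ := hB s hs
    exact ⟨α, h⟩

theorem exists_sorted_walk {R : Step I → A → A → Prop} (r : I → Ordinal)
    (hres : ∀ {s t a b c}, Descent s t → R s a b → R t b c →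
      ∃ Z, Walk R Z a c ∧ ∀ x, interpList r Z x < interpList r [s, t] x)
    (l : List (Step I)) {a b : A} (hl : Walk R l a b) :
    ∃ l', IsSorted l' ∧ Walk R l' a b ∧ ∀ x, interpList r l' x ≤ interpList r l x := by
  -- Ordinal addition is not strictly monotone in its left argument, so descents are only
  -- resolved at the head, after sorting the tail; hence the pointwise bound in the statement.
  induction l using (InvImage.wf (interpList r · 0) wellFounded_lt).induction generalizing a with
  | _ l ih =>
  rcases l with _ | ⟨s, l⟩
  · exact ⟨[], isSorted_nil, hl, fun _ => le_rfl⟩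
  obtain ⟨a', hs, hl⟩ := hl
  obtain ⟨l₁, hsorted, hw₁, hle₁⟩ := ih l (s.lt_interp r _) hl
  have hle : ∀ x, interpList r (s :: l₁) x ≤ interpList r (s :: l) x :=
    fun x => s.interp_mono r (hle₁ x)
  rcases hsorted.cons_or_exists_descent s with hsorted' | ⟨t, Q, rfl, hst⟩
  · exact ⟨s :: l₁, hsorted', ⟨a', hs, hw₁⟩, hle⟩
  obtain ⟨c, ht, hQ⟩ := hw₁
  obtain ⟨Z, hZ, hlt⟩ := hres hst hs ht
  have hdecr : ∀ x, interpList r (Z ++ Q) x < interpList r (s :: l) x := fun x => by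
    simpa using (hlt (interpList r Q x)).trans_le (hle x)
  obtain ⟨l₂, hsorted₂, hw₂, hle₂⟩ := ih (Z ++ Q) (hdecr 0) (hZ.append hQ)
  exact ⟨l₂, hsorted₂, hw₂, fun x => (hle₂ x).trans (hdecr x).le⟩

end Sorting

section Resolution

variable {A I : Type*} {succ : I → I → Prop} {ar : I → A → A → Prop} {hd : A → A → Prop}

def LocallyDecreasingPeaks (succ : I → I → Prop) (ar : I → A → A → Prop)
    (hd : A → A → Prop) : Prop :=
  ∀ α β a b c, ar α b a → ar β b c →
    ∃ x1 x2 x3 x4 x5 x6,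
      ReflTransGen (fun x y => ∃ γ, succ α γ ∧ ar γ x y) a x1 ∧
      ReflGen (ar β) x1 x2 ∧
      ReflTransGen (fun x y => ∃ γ, (succ α γ ∨ succ β γ) ∧ ar γ x y) x2 x3 ∧
      ReflTransGen hd x3 x4 ∧
      ReflTransGen (fun x y => ∃ γ, (succ α γ ∨ succ β γ) ∧ ar γ x y) x5 x4 ∧
      ReflGen (ar α) x6 x5 ∧
      ReflTransGen (fun x y => ∃ γ, succ β γ ∧ ar γ x y) c x6

def LocallyDecreasingCliffs (succ : I → I → Prop) (ar : I → A → A → Prop)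
    (hd : A → A → Prop) : Prop :=
  ∀ β a b c, hd a b → ar β b c →
    ∃ y1 y2 y3,
      ReflGen (ar β) a y1 ∧
      ReflTransGen (fun x y => ∃ γ, succ β γ ∧ ar γ x y) y1 y2 ∧
      ReflTransGen hd y2 y3 ∧
      ReflTransGen (fun x y => ∃ γ, succ β γ ∧ ar γ x y) c y3

variable (r : I → Ordinal)

theorem exists_fwd_walk {P : I → Prop} {c : Ordinal} (hP : ∀ {γ}, P γ → ω ^ r γ + c = c)
    {a b : A} (h : ReflTransGen (fun x y => ∃ γ, P γ ∧ ar γ x y) a b) :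
    ∃ l, (∀ s ∈ l, s.IsBelow r c) ∧ Walk (Step.rel ar hd) l a b :=
  exists_walk_of_reflTransGen (fun _ _ ⟨γ, hγ, h⟩ => ⟨fwd γ, hP hγ, h⟩) h

theorem exists_bwd_walk {P : I → Prop} {c : Ordinal} (hP : ∀ {γ}, P γ → ω ^ r γ + c = c)
    {a b : A} (h : ReflTransGen (fun x y => ∃ γ, P γ ∧ ar γ x y) b a) :
    ∃ l, (∀ s ∈ l, s.IsBelow r c) ∧ Walk (Step.rel ar hd) l a b :=
  exists_walk_of_reflTransGen (fun _ _ ⟨γ, hγ, h⟩ => ⟨bwd γ, hP hγ, h⟩) (reflTransGen_swap.2 h)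

theorem exists_eps_walk {e : A → A → Prop} (he : ∀ x y, e x y → hd x y) (c : Ordinal) {a b : A}
    (h : ReflTransGen e a b) :
    ∃ l, (∀ s ∈ l, s.IsBelow r c) ∧ Walk (Step.rel ar hd) l a b :=
  exists_walk_of_reflTransGen (fun _ _ h => ⟨eps, zero_add c, he _ _ h⟩) h

variable {r}

theorem opow_add_opow_of_succ (hr : ∀ α γ, succ α γ → r γ < r α) {α γ : I} (h : succ α γ) :
    ω ^ r γ + ω ^ r α = ω ^ r α :=
  add_omega0_opow ((opow_lt_opow_iff_right one_lt_omega0).2 (hr α γ h))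

theorem exists_walk_lt_of_peak (hr : ∀ α γ, succ α γ → r γ < r α)
    (hi : LocallyDecreasingPeaks succ ar hd) {α β : I} {a b c : A}
    (hα : ar α b a) (hβ : ar β b c) :
    ∃ Z, Walk (Step.rel ar hd) Z a c ∧ ∀ x, interpList r Z x < interpList r [bwd α, fwd β] x := by
  obtain ⟨x₁, x₂, x₃, x₄, x₅, x₆, h₁, hb, h₂, he, h₃, ha, h₄⟩ := hi α β a b c hα hβ
  have hmid {γ} (hγ : succ α γ ∨ succ β γ) :
      ω ^ r γ + (ω ^ r α + ω ^ r β) = ω ^ r α + ω ^ r β :=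
    opow_add_add_opow_of_lt_or_lt (hγ.imp (hr _ _) (hr _ _))
  obtain ⟨L₁, hL₁, w₁⟩ := exists_fwd_walk (hd := hd) r (opow_add_opow_of_succ hr) h₁
  obtain ⟨Lb, hLb, wb⟩ := exists_walk_of_eq_or (R := Step.rel ar hd) (s := fwd β)
    ((reflGen_iff _ _ _).1 hb)
  obtain ⟨L₂, hL₂, w₂⟩ := exists_fwd_walk (hd := hd) r hmid h₂
  obtain ⟨Le, hLe, we⟩ := exists_eps_walk (ar := ar) r (fun _ _ => id) _ he
  obtain ⟨L₃, hL₃, w₃⟩ := exists_bwd_walk (hd := hd) r hmid h₃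
  obtain ⟨La, hLa, wa⟩ := exists_walk_of_eq_or (R := Step.rel ar hd) (s := bwd α)
    (((reflGen_iff _ _ _).1 ha).imp Eq.symm id)
  obtain ⟨L₄, hL₄, w₄⟩ := exists_bwd_walk (hd := hd) r (opow_add_opow_of_succ hr) h₄
  refine ⟨_, (((w₁.append wb).append ((w₂.append we).append w₃)).append wa).append w₄,
    interpList_peak_lt r hL₁ hLb ?_ hLa hL₄⟩
  simp only [List.forall_mem_append]
  exact ⟨⟨hL₂, hLe⟩, hL₃⟩

theorem exists_walk_lt_of_eps_fwd (hr : ∀ α γ, succ α γ → r γ < r α)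
    (hii : LocallyDecreasingCliffs succ ar hd) {β : I} {a b c : A}
    (hh : hd a b) (hβ : ar β b c) :
    ∃ Z, Walk (Step.rel ar hd) Z a c ∧ ∀ x, interpList r Z x < interpList r [eps, fwd β] x := by
  obtain ⟨y₁, y₂, y₃, hb, h₂, he, h₄⟩ := hii β a b c hh hβ
  obtain ⟨Lb, hLb, wb⟩ := exists_walk_of_eq_or (R := Step.rel ar hd) (s := fwd β)
    ((reflGen_iff _ _ _).1 hb)
  obtain ⟨L₂, hL₂, w₂⟩ := exists_fwd_walk (hd := hd) r (opow_add_opow_of_succ hr) h₂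
  obtain ⟨Le, hLe, we⟩ := exists_eps_walk (ar := ar) r (fun _ _ => id) _ he
  obtain ⟨L₄, hL₄, w₄⟩ := exists_bwd_walk (hd := hd) r (opow_add_opow_of_succ hr) h₄
  refine ⟨_, wb.append ((w₂.append we).append w₄), interpList_eps_fwd_lt r hLb ?_⟩
  simp only [List.forall_mem_append]
  exact ⟨⟨hL₂, hLe⟩, hL₄⟩

theorem exists_walk_lt_of_bwd_eps (hr : ∀ α γ, succ α γ → r γ < r α)
    (hsym : ∀ a b, hd a b → hd b a)
    (hii : LocallyDecreasingCliffs succ ar hd) {α : I} {a b c : A} (hα : ar α b a) (hh : hd b c) :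
    ∃ Z, Walk (Step.rel ar hd) Z a c ∧ ∀ x, interpList r Z x < interpList r [bwd α, eps] x := by
  obtain ⟨y₁, y₂, y₃, ha, h₃, he, h₁⟩ := hii α c b a (hsym _ _ hh) hα
  obtain ⟨L₁, hL₁, w₁⟩ := exists_fwd_walk (hd := hd) r (opow_add_opow_of_succ hr) h₁
  obtain ⟨Le, hLe, we⟩ := exists_eps_walk (ar := ar) r (fun x y h => hsym y x h) _
    (reflTransGen_swap.2 he)
  obtain ⟨L₃, hL₃, w₃⟩ := exists_bwd_walk (hd := hd) r (opow_add_opow_of_succ hr) h₃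
  obtain ⟨La, hLa, wa⟩ := exists_walk_of_eq_or (R := Step.rel ar hd) (s := bwd α)
    (((reflGen_iff _ _ _).1 ha).imp Eq.symm id)
  refine ⟨_, ((w₁.append we).append w₃).append wa, interpList_bwd_eps_lt r ?_ hLa⟩
  simp only [List.forall_mem_append]
  exact ⟨⟨hL₁, hLe⟩, hL₃⟩

theorem exists_walk_lt_of_descent (hr : ∀ α γ, succ α γ → r γ < r α)
    (hsym : ∀ a b, hd a b → hd b a)
    (hi : LocallyDecreasingPeaks succ ar hd) (hii : LocallyDecreasingCliffs succ ar hd)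
    {s t : Step I} {a b c : A} (hst : Descent s t) (h₁ : s.rel ar hd a b) (h₂ : t.rel ar hd b c) :
    ∃ Z, Walk (Step.rel ar hd) Z a c ∧ ∀ x, interpList r Z x < interpList r [s, t] x := by
  cases hst with
  | bwd_fwd α β => exact exists_walk_lt_of_peak hr hi h₁ h₂
  | eps_fwd β => exact exists_walk_lt_of_eps_fwd hr hii h₁ h₂
  | bwd_eps α => exact exists_walk_lt_of_bwd_eps hr hsym hii h₁ h₂

end Resolution

end DecreasingDiagrams

theorem crm_decreasing_diagrams_general {A I : Type*} (succ : I → I → Prop)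
    (ar : I → A → A → Prop) (hd : A → A → Prop)
    (hwf : ¬ ∃ f : ℕ → I, ∀ n, succ (f n) (f (n + 1)))
    (hsym : ∀ a b, hd a b → hd b a)
    (hi : ∀ α β a b c, ar α b a → ar β b c →
      ∃ x1 x2 x3 x4 x5 x6,
        Relation.ReflTransGen (fun x y => ∃ γ, succ α γ ∧ ar γ x y) a x1 ∧
        Relation.ReflGen (ar β) x1 x2 ∧
        Relation.ReflTransGen
          (fun x y => ∃ γ, (succ α γ ∨ succ β γ) ∧ ar γ x y) x2 x3 ∧
        Relation.ReflTransGen hd x3 x4 ∧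
        Relation.ReflTransGen
          (fun x y => ∃ γ, (succ α γ ∨ succ β γ) ∧ ar γ x y) x5 x4 ∧
        Relation.ReflGen (ar α) x6 x5 ∧
        Relation.ReflTransGen (fun x y => ∃ γ, succ β γ ∧ ar γ x y) c x6)
    (hii : ∀ β a b c, hd a b → ar β b c →
      ∃ y1 y2 y3,
        Relation.ReflGen (ar β) a y1 ∧
        Relation.ReflTransGen (fun x y => ∃ γ, succ β γ ∧ ar γ x y) y1 y2 ∧
        Relation.ReflTransGen hd y2 y3 ∧
        Relation.ReflTransGen (fun x y => ∃ γ, succ β γ ∧ ar γ x y) c y3) :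
    ∀ a b, Relation.ReflTransGen (fun x y =>
        (∃ α, ar α x y) ∨ (∃ α, ar α y x) ∨ hd x y) a b →
      ∃ u v, Relation.ReflTransGen (fun x y => ∃ α, ar α x y) a u ∧
        Relation.ReflTransGen hd u v ∧
        Relation.ReflTransGen (fun x y => ∃ α, ar α x y) b v := by
  intro a b hab
  have : IsWellFounded I (flip succ) :=
    ⟨wellFounded_iff_isEmpty_descending_chain.2 ⟨fun f => hwf ⟨f.1, f.2⟩⟩⟩
  have hr (α γ : I) (h : succ α γ) : IsWellFounded.rank (flip succ) γ <
      IsWellFounded.rank (flip succ) α :=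
    IsWellFounded.rank_lt_of_rel h
  obtain ⟨l, -, hl⟩ := DecreasingDiagrams.exists_walk_of_reflTransGen
    (R := DecreasingDiagrams.Step.rel ar hd) (P := fun _ => True)
    (by rintro x y (⟨α, h⟩ | ⟨α, h⟩ | h)
        exacts [⟨.fwd α, trivial, h⟩, ⟨.bwd α, trivial, h⟩, ⟨.eps, trivial, h⟩]) hab
  obtain ⟨l', hsorted, hl', -⟩ := DecreasingDiagrams.exists_sorted_walk _
    (DecreasingDiagrams.exists_walk_lt_of_descent hr hsym hi hii) l hl
  exact hsorted.exists_of_walk hl'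

/-- Proposition 2.16 (Theorem 14 of Ohlebusch 1998).
`succ α β` means `α ≻ β`; `ar α` is `→_α`; `hd` is the (unindexed) symmetric
relation `⊢⊣`; `⋎α = {γ | γ ≺ α}`. -/
theorem crm_decreasing_diagrams {A I : Type*} (succ : I → I → Prop)
    (ar : I → A → A → Prop) (hd : A → A → Prop)
    (hirrefl : ∀ α, ¬ succ α α)
    (htrans : ∀ α β γ, succ α β → succ β γ → succ α γ)
    (hwf : ¬ ∃ f : ℕ → I, ∀ n, succ (f n) (f (n + 1)))
    (hsym : ∀ a b, hd a b → hd b a)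
    (hi : ∀ α β a b c, ar α b a → ar β b c →
      ∃ x1 x2 x3 x4 x5 x6,
        Relation.ReflTransGen (fun x y => ∃ γ, succ α γ ∧ ar γ x y) a x1 ∧
        Relation.ReflGen (ar β) x1 x2 ∧
        Relation.ReflTransGen
          (fun x y => ∃ γ, (succ α γ ∨ succ β γ) ∧ ar γ x y) x2 x3 ∧
        Relation.ReflTransGen hd x3 x4 ∧
        Relation.ReflTransGen
          (fun x y => ∃ γ, (succ α γ ∨ succ β γ) ∧ ar γ x y) x5 x4 ∧
        Relation.ReflGen (ar α) x6 x5 ∧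
        Relation.ReflTransGen (fun x y => ∃ γ, succ β γ ∧ ar γ x y) c x6)
    (hii : ∀ β a b c, hd a b → ar β b c →
      ∃ y1 y2 y3,
        Relation.ReflGen (ar β) a y1 ∧
        Relation.ReflTransGen (fun x y => ∃ γ, succ β γ ∧ ar γ x y) y1 y2 ∧
        Relation.ReflTransGen hd y2 y3 ∧
        Relation.ReflTransGen (fun x y => ∃ γ, succ β γ ∧ ar γ x y) c y3) :
    ∀ a b, Relation.ReflTransGen (fun x y =>
        (∃ α, ar α x y) ∨ (∃ α, ar α y x) ∨ hd x y) a b →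
      ∃ u v, Relation.ReflTransGen (fun x y => ∃ α, ar α x y) a u ∧
        Relation.ReflTransGen hd u v ∧
        Relation.ReflTransGen (fun x y => ∃ α, ar α x y) b v :=
  crm_decreasing_diagrams_general succ ar hd hwf hsym hi hii
end

section
/- Let →_S and →_P be relations on a set A such that →_P is reversible, i.e. a →_P b implies b (→_P)* a. If →_S is Church-Rosser modulo (↔_P)* (taking the symmetric relation ⊢⊣ to be ↔_P, the symmetric closure of →_P), then the union →_S ∪ →_P is confluent. -/
/-!
A peak `b ←* a →* c` of `→_S ∪ →_P` is in particular a conversion, so the Church-Rosser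
property modulo `(↔_P)*` yields `b →_S* u (↔_P)* v ←_S* c`. Reversibility turns every
`←_P` step into a `→_P*` sequence, so `u (↔_P)* v` is already `u →_P* v`, and `v` is a
common reduct of `b` and `c`.
-/

namespace Relation

variable {α : Type*} {r : α → α → Prop} {a b c : α}

theorem reflTransGen_symmGen_of_reversible (hrev : ∀ a b, r a b → ReflTransGen r b a) :
    ReflTransGen (SymmGen r) = ReflTransGen r := by
  refine le_antisymm (reflTransGen_closed ?_) (ReflTransGen.mono fun _ _ => SymmGen.of_rel)
  rintro x y (hxy | hyx)
  · exact .single hxy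
  · exact hrev y x hyx

theorem ReflTransGen.symmGen_of_peak (hab : ReflTransGen r a b) (hac : ReflTransGen r a c) :
    ReflTransGen (SymmGen r) b c :=
  have lift := ReflTransGen.mono (r := r) (p := SymmGen r) fun _ _ => SymmGen.of_rel
  (symm_of (ReflTransGen (SymmGen r)) (lift _ _ hab)).trans (lift _ _ hac)

end Relation

open Relation

/-- Lemma 3.4 (confluence by CRM and reversibility):
if `→_P` is reversible and `→_S` is Church-Rosser modulo `(↔_P)*`, then
`→_S ∪ →_P` is confluent. -/
theorem confluence_by_crm_and_reversibility {A : Type*} (S P : A → A → Prop)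
    (hrev : ∀ a b, P a b → Relation.ReflTransGen P b a)
    (hcrm : ∀ a b, Relation.ReflTransGen
        (fun x y => S x y ∨ S y x ∨ (P x y ∨ P y x)) a b →
      ∃ u v, Relation.ReflTransGen S a u ∧
        Relation.ReflTransGen (fun x y => P x y ∨ P y x) u v ∧
        Relation.ReflTransGen S b v) :
    ∀ a b c, Relation.ReflTransGen (fun x y => S x y ∨ P x y) a b →
      Relation.ReflTransGen (fun x y => S x y ∨ P x y) a c →
      ∃ d, Relation.ReflTransGen (fun x y => S x y ∨ P x y) b d ∧
        Relation.ReflTransGen (fun x y => S x y ∨ P x y) c d := by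
  intro a b c hab hac
  have hconv : ReflTransGen (fun x y => S x y ∨ S y x ∨ (P x y ∨ P y x)) b c :=
    ReflTransGen.mono (fun x y h => by unfold SymmGen at h; tauto) _ _
      (hab.symmGen_of_peak hac)
  obtain ⟨u, v, hbu, huv, hcv⟩ := hcrm b c hconv
  have hPuv : ReflTransGen P u v := by
    rw [← reflTransGen_symmGen_of_reversible hrev]
    exact huv
  exact ⟨v, (ReflTransGen.mono (fun _ _ => Or.inl) _ _ hbu).trans
      (ReflTransGen.mono (fun _ _ => Or.inr) _ _ hPuv),
    ReflTransGen.mono (fun _ _ => Or.inl) _ _ hcv⟩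
end
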